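/- arXiv:2211.15945 — 6 statements merged into one kernel-verified Lean document; each statement's English description precedes it below -/
import Mathlib

section
/- Let S be a string and let p and q be positive integers that are both periods of S and satisfy p + q ≤ |S|. Then gcd(p, q) is also a period of S. -/
/-! When `p < q` are periods with `p + q ≤ n`, so is `q - p`: every position `i` lies either
`q` steps before or `p` steps after another position. Euclid's subtractive algorithm then carries
the pair `(p, q)` down to `gcd p q`, and the bound `p + q ≤ n` only improves along the way. -/

/-- A string of length `n` is modeled as a function `S : ℕ → α`, read at the
1-indexed positions `1, …, n`.  A positive integer `p ≤ n` is a *period* of `S`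
if `S[i] = S[i+p]` holds for all `1 ≤ i ≤ n - p`. -/
def IsPeriod {α : Type*} (S : ℕ → α) (n p : ℕ) : Prop :=
  1 ≤ p ∧ p ≤ n ∧ ∀ i, 1 ≤ i → i + p ≤ n → S i = S (i + p)

theorem IsPeriod.sub {α : Type*} {S : ℕ → α} {n p q : ℕ}
    (hp : IsPeriod S n p) (hq : IsPeriod S n q) (hlt : p < q) (hpq : p + q ≤ n) :
    IsPeriod S n (q - p) := by
  obtain ⟨-, -, hpS⟩ := hp
  obtain ⟨-, -, hqS⟩ := hq
  refine ⟨by omega, by omega, fun i hi hin => ?_⟩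
  by_cases h : i + q ≤ n
  · calc S i = S (i + q) := hqS i hi h
      _ = S (i + (q - p)) := by
        rw [hpS (i + (q - p)) (by omega) (by omega), show i + (q - p) + p = i + q by omega]
  · -- `i + q > n ≥ p + q` forces `i > p`, so we can step back by `p` instead.
    calc S i = S (i - p + p) := by rw [Nat.sub_add_cancel (by omega)]
      _ = S (i - p) := (hpS (i - p) (by omega) (by omega)).symm
      _ = S (i + (q - p)) := by
        rw [hqS (i - p) (by omega) (by omega), show i - p + q = i + (q - p) by omega]

/-- **Weak Periodicity Lemma**: if a string `S` of length `n` has periods `p` and `q`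
with `p + q ≤ n`, then `gcd(p, q)` is also a period of `S`. -/
theorem weak_periodicity_lemma {α : Type*} (S : ℕ → α) (n p q : ℕ)
    (hp : IsPeriod S n p) (hq : IsPeriod S n q) (hpq : p + q ≤ n) :
    IsPeriod S n (Nat.gcd p q) := by
  induction h : p + q using Nat.strong_induction_on generalizing p q with
  | _ m ih =>
  wlog hle : p ≤ q generalizing p q
  · rw [Nat.gcd_comm]
    exact this q p hq hp (by omega) (by omega) (by omega)
  rcases hle.eq_or_lt with rfl | hlt
  · rwa [Nat.gcd_self]
  · have hsub := hp.sub hq hlt hpq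
    rw [← Nat.gcd_sub_self_right hle]
    exact ih (p + (q - p)) (by have hp_pos := hp.1; omega) p (q - p) hp hsub (by omega) rfl
end

section
/- Let T be a string of length n, let τ be a positive integer with τ ≤ n/2, let X be a linearly ordered set, and let φ : Σ^τ → X be any function on length-τ strings. Write Φ(i) = φ(T[i .. i+τ−1]) for i ∈ [1 .. n−τ+1], and let Q = {i ∈ [1 .. n−τ+1] : per(T[i .. i+τ−1]) ≤ τ/3}. Define A = {i ∈ [1 .. n−2τ+1] : the set {j ∈ [i .. i+τ] : j ∉ Q} is nonempty and min{Φ(j) : j ∈ [i .. i+τ], j ∉ Q} ∈ {Φ(i), Φ(i+τ)}}. Then A is a τ-synchronizing set of T, i.e.: (consistency) if T[i .. i+2τ−1] = T[j .. j+2τ−1] then i ∈ A if and only if j ∈ A; and (density) for every i ∈ [1 .. n−3τ+2], A ∩ [i .. i+τ−1] = ∅ if and only if per(T[i .. i+3τ−2]) ≤ τ/3. -/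
/-- `per(S)`: the minimal period of the length-`n` string `S`. -/
noncomputable def minPer {α : Type*} (S : ℕ → α) (n : ℕ) : ℕ :=
  sInf {p | IsPeriod S n p}

/-- The length-`τ` substring `T[i .. i+τ-1]` of `T`, as an element of `Σ^τ`. -/
def window {α : Type*} (T : ℕ → α) (τ i : ℕ) : Fin τ → α :=
  fun t => T (i + t.val)

/-- `per(T[i .. i+τ-1])`, the minimal period of the length-`τ` window starting at `i`. -/
noncomputable def winPer {α : Type*} (T : ℕ → α) (τ i : ℕ) : ℕ :=
  minPer (fun t => T (i + t - 1)) τ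

section

variable {α : Type*}

/-- `p` is a period of `S[a..b]`, both ends included; `p = 0` is not excluded. -/
def HasPeriodOn (S : ℕ → α) (a b p : ℕ) : Prop :=
  ∀ t, a ≤ t → t + p ≤ b → S t = S (t + p)

def substring (S : ℕ → α) (a b : ℕ) : List α :=
  List.ofFn fun i : Fin (b + 1 - a) => S (a + i)

namespace HasPeriodOn

variable {S : ℕ → α} {a b c p q : ℕ}

theorem mono {a' b' : ℕ} (h : HasPeriodOn S a b p) (ha : a ≤ a') (hb : b' ≤ b) :
    HasPeriodOn S a' b' p :=
  fun t ht htp => h t (ha.trans ht) (htp.trans hb)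

theorem iff_hasPeriod_substring : HasPeriodOn S a b p ↔ (substring S a b).HasPeriod p := by
  rw [List.hasPeriod_iff_getElem?]
  simp only [substring, List.length_ofFn, List.getElem?_ofFn]
  constructor
  · intro h i hi
    simp only [show i < b + 1 - a by omega, show i + p < b + 1 - a by omega, ↓reduceDIte,
      Option.some.injEq, ← add_assoc]
    exact h _ (by omega) (by omega)
  · intro h t hat htb
    have := h (t - a) (by omega)
    simp only [show t - a < b + 1 - a by omega, show t - a + p < b + 1 - a by omega, ↓reduceDIte,
      Option.some.injEq] at this
    convert this using 2 <;> omega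

/-- Fine and Wilf's periodicity lemma, transferred from `List.HasPeriod.gcd`. -/
theorem gcd (hp : HasPeriodOn S a b p) (hq : HasPeriodOn S a b q)
    (hlen : p + q - p.gcd q ≤ b + 1 - a) : HasPeriodOn S a b (p.gcd q) := by
  rw [iff_hasPeriod_substring] at *
  exact hp.gcd hq (by simpa [substring] using hlen)

theorem eq_of_modEq (h : HasPeriodOn S a b p) {s t : ℕ} (has : a ≤ s) (hsb : s ≤ b)
    (hat : a ≤ t) (htb : t ≤ b) (hst : s ≡ t [MOD p]) : S s = S t := by
  wlog hle : s ≤ t generalizing s t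
  · exact (this hat htb has hsb hst.symm (by omega)).symm
  obtain ⟨k, hk⟩ := (Nat.modEq_iff_dvd' hle).1 hst
  obtain rfl : t = s + p * k := by omega
  clear hk hst hle hat
  induction k with
  | zero => rfl
  | succ k ih =>
    rw [Nat.mul_succ, ← add_assoc] at htb ⊢
    rw [ih (by omega)]
    exact h _ (by omega) htb

/-- On the overlap `S[c..b]` both `p` and `q` are multiples of the period `gcd p q`, so
`S (b + 1 - p) = S (b + 1 - q) = S (b + 1)`. -/
theorem extend_right (hp : HasPeriodOn S a b p) (hq : HasPeriodOn S c (b + 1) q) (hac : a ≤ c)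
    (hp1 : 1 ≤ p) (hq1 : 1 ≤ q) (hlen : c + p + q ≤ b + 1) : HasPeriodOn S a (b + 1) p := by
  intro t hat htp
  rcases (by omega : t + p ≤ b ∨ t + p = b + 1) with hle | heq
  · exact hp t hat hle
  have hg := (hp.mono hac le_rfl).gcd (hq.mono le_rfl b.le_succ) (by omega)
  have hmod : t ≡ b + 1 - q [MOD p.gcd q] :=
    calc t ≡ t + p [MOD p.gcd q] := by
          simpa using (Nat.ModEq.add_left t (Nat.modEq_zero_iff_dvd.2 (p.gcd_dvd_left q))).symm
      _ = b + 1 - q + q := by omega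
      _ ≡ b + 1 - q [MOD p.gcd q] := by
          simpa using Nat.ModEq.add_left (b + 1 - q) (Nat.modEq_zero_iff_dvd.2 (p.gcd_dvd_right q))
  calc S t = S (b + 1 - q) := hg.eq_of_modEq (by omega) (by omega) (by omega) (by omega) hmod
    _ = S (b + 1 - q + q) := hq _ (by omega) (by omega)
    _ = S (t + p) := by rw [heq]; congr 1; omega

end HasPeriodOn

section MinimalPeriod

variable {S : ℕ → α} {a m k L : ℕ}

theorem isPeriod_shift_iff {p : ℕ} :
    IsPeriod (fun t => S (a + t - 1)) m p ↔ 1 ≤ p ∧ p ≤ m ∧ HasPeriodOn S a (a + m - 1) p := by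
  refine and_congr_right fun hp1 => and_congr_right fun hpm =>
    ⟨fun h t hat htp => ?_, fun h i hi hip => ?_⟩
  · have := h (t - a + 1) (by omega) (by omega)
    simp only at this
    convert this using 2 <;> omega
  · have := h (a + i - 1) (by omega) (by omega)
    convert this using 2
    omega

theorem isPeriod_minPer {n : ℕ} (hn : 1 ≤ n) : IsPeriod S n (minPer S n) :=
  Nat.sInf_mem (s := {p | IsPeriod S n p}) ⟨n, hn, le_rfl, fun i _ hin => by omega⟩

theorem minPer_le {n p : ℕ} (h : IsPeriod S n p) : minPer S n ≤ p :=
  Nat.sInf_le h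

theorem minPer_congr {S' : ℕ → α} {n : ℕ} (h : ∀ t, 1 ≤ t → t ≤ n → S t = S' t) :
    minPer S n = minPer S' n := by
  have key : ∀ {S S' : ℕ → α}, (∀ t, 1 ≤ t → t ≤ n → S t = S' t) →
      ∀ p, IsPeriod S n p → IsPeriod S' n p := by
    rintro S S' h p ⟨hp1, hpn, hp⟩
    refine ⟨hp1, hpn, fun i hi hip => ?_⟩
    rw [← h i hi (by omega), ← h (i + p) (by omega) hip]
    exact hp i hi hip
  unfold minPer
  congr 1
  ext p
  exact ⟨key h p, key (fun t h1 h2 => (h t h1 h2).symm) p⟩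

theorem minPer_shift_le_iff (hm : 1 ≤ m) (hk : k ≤ m) :
    minPer (fun t => S (a + t - 1)) m ≤ k ↔
      ∃ p, 1 ≤ p ∧ p ≤ k ∧ HasPeriodOn S a (a + m - 1) p := by
  constructor
  · intro h
    obtain ⟨hp1, -, hp⟩ := isPeriod_shift_iff.1 (isPeriod_minPer (S := fun t => S (a + t - 1)) hm)
    exact ⟨_, hp1, h, hp⟩
  · rintro ⟨p, hp1, hpk, hp⟩
    exact (minPer_le (isPeriod_shift_iff.2 ⟨hp1, by omega, hp⟩)).trans hpk

theorem exists_hasPeriodOn_of_windows (hk : 2 * k < m) (hL : m ≤ L)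
    (h : ∀ c, a ≤ c → c + m ≤ a + L → ∃ q, 1 ≤ q ∧ q ≤ k ∧ HasPeriodOn S c (c + m - 1) q) :
    ∃ p, 1 ≤ p ∧ p ≤ k ∧ HasPeriodOn S a (a + L - 1) p := by
  obtain ⟨p, hp1, hpk, hp⟩ := h a le_rfl (by omega)
  refine ⟨p, hp1, hpk, ?_⟩
  suffices ∀ e, m + e ≤ L → HasPeriodOn S a (a + m - 1 + e) p by
    simpa [show a + m - 1 + (L - m) = a + L - 1 by omega] using this (L - m) (by omega)
  intro e
  induction e with
  | zero => exact fun _ => hp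
  | succ e ih =>
    intro he
    obtain ⟨q, hq1, hqk, hq⟩ := h (a + e + 1) (by omega) (by omega)
    rw [show a + e + 1 + m - 1 = a + m - 1 + e + 1 by omega] at hq
    exact (ih (by omega)).extend_right hq (by omega) hp1 hq1 (by omega)

theorem minPer_shift_le_iff_forall_window (hk : 2 * k < m) (hL : m ≤ L) :
    minPer (fun t => S (a + t - 1)) L ≤ k ↔
      ∀ c, a ≤ c → c + m ≤ a + L → minPer (fun t => S (c + t - 1)) m ≤ k := by
  rw [minPer_shift_le_iff (by omega) (by omega)]
  constructor
  · rintro ⟨p, hp1, hpk, hp⟩ c hac hcL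
    exact (minPer_shift_le_iff (by omega) (by omega)).2 ⟨p, hp1, hpk, hp.mono hac (by omega)⟩
  · intro h
    exact exists_hasPeriodOn_of_windows hk hL fun c hac hcL =>
      (minPer_shift_le_iff (by omega) (by omega)).1 (h c hac hcL)

end MinimalPeriod

theorem winPer_congr {T : ℕ → α} {τ k k' : ℕ} (h : ∀ t < τ, T (k + t) = T (k' + t)) :
    winPer T τ k = winPer T τ k' :=
  minPer_congr fun t ht _ => by
    simpa [show k + t - 1 = k + (t - 1) by omega, show k' + t - 1 = k' + (t - 1) by omega]
      using h (t - 1) (by omega)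

section Synchronizing

variable {X : Type*} [LinearOrder X]

/-- `min {Φ j | j ∈ [i, i + τ] \ Q} ∈ {Φ i, Φ (i + τ)}`, the minimum being required to exist. -/
def MinAtEnds (Φ : ℕ → X) (Q : Set ℕ) (τ i : ℕ) : Prop :=
  ∃ j₀ ∈ Set.Icc i (i + τ), j₀ ∉ Q ∧ (∀ j ∈ Set.Icc i (i + τ), j ∉ Q → Φ j₀ ≤ Φ j) ∧
    (Φ j₀ = Φ i ∨ Φ j₀ = Φ (i + τ))

theorem MinAtEnds.of_shift {Φ Ψ : ℕ → X} {Q Q' : Set ℕ} {τ i j : ℕ}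
    (hΦ : ∀ d ≤ τ, Φ (i + d) = Ψ (j + d)) (hQ : ∀ d ≤ τ, i + d ∈ Q ↔ j + d ∈ Q')
    (h : MinAtEnds Φ Q τ i) : MinAtEnds Ψ Q' τ j := by
  obtain ⟨j₀, ⟨hij₀, hj₀⟩, hj₀Q, hmin, hend⟩ := h
  obtain ⟨d₀, rfl⟩ := Nat.exists_eq_add_of_le hij₀
  refine ⟨j + d₀, ⟨by omega, by omega⟩, fun h => hj₀Q ((hQ d₀ (by omega)).2 h), ?_, ?_⟩
  · rintro _ ⟨hjm, hm⟩ hmQ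
    obtain ⟨d, rfl⟩ := Nat.exists_eq_add_of_le hjm
    rw [← hΦ d₀ (by omega), ← hΦ d (by omega)]
    exact hmin _ ⟨by omega, by omega⟩ fun h => hmQ ((hQ d (by omega)).1 h)
  · have h0 : Φ i = Ψ j := by simpa using hΦ 0 (Nat.zero_le τ)
    rwa [← hΦ d₀ (by omega), ← hΦ τ le_rfl, ← h0]

/-- A minimiser `j₀` of `Φ` over `[i, i + 2τ) \ Q` is an end of the window `[k, k + τ]` for
`k = j₀` or `k = j₀ - τ`. -/
theorem exists_minAtEnds_of_notMem (Φ : ℕ → X) {Q : Set ℕ} {τ i j : ℕ} (hij : i ≤ j)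
    (hj : j < i + 2 * τ) (hjQ : j ∉ Q) : ∃ k, i ≤ k ∧ k < i + τ ∧ MinAtEnds Φ Q τ k := by
  classical
  obtain ⟨j₀, hj₀, hmin⟩ := ((Finset.Ico i (i + 2 * τ)).filter (· ∉ Q)).exists_min_image Φ
    ⟨j, Finset.mem_filter.2 ⟨Finset.mem_Ico.2 ⟨hij, hj⟩, hjQ⟩⟩
  rw [Finset.mem_filter, Finset.mem_Ico] at hj₀
  have hends : ∀ k, i ≤ k → k < i + τ → (j₀ = k ∨ j₀ = k + τ) → MinAtEnds Φ Q τ k := by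
    intro k hik hk hend
    refine ⟨j₀, ⟨by omega, by omega⟩, hj₀.2, ?_, by rcases hend with rfl | rfl <;> simp⟩
    rintro m ⟨hkm, hmk⟩ hmQ
    exact hmin m (Finset.mem_filter.2 ⟨Finset.mem_Ico.2 ⟨by omega, by omega⟩, hmQ⟩)
  by_cases hj₀τ : j₀ < i + τ
  · exact ⟨j₀, hj₀.1.1, hj₀τ, hends j₀ hj₀.1.1 hj₀τ (Or.inl rfl)⟩
  · exact ⟨j₀ - τ, by omega, by omega, hends _ (by omega) (by omega) (Or.inr (by omega))⟩

variable (T : ℕ → α) (n τ : ℕ) (φ : (Fin τ → α) → X)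

/-- The set `Q`. -/
def highlyPeriodicSet : Set ℕ :=
  {i | 1 ≤ i ∧ i + τ ≤ n + 1 ∧ winPer T τ i ≤ τ / 3}

/-- The set `A`. -/
def localMinimaSet : Set ℕ :=
  {i | 1 ≤ i ∧ i + 2 * τ ≤ n + 1 ∧
    MinAtEnds (fun j => φ (window T τ j)) (highlyPeriodicSet T n τ) τ i}

variable {T n τ φ}

theorem mem_localMinimaSet_congr {i j : ℕ} (hi : 1 ≤ i) (hin : i + 2 * τ ≤ n + 1) (hj : 1 ≤ j)
    (hjn : j + 2 * τ ≤ n + 1) (h : ∀ t, 1 ≤ t → t ≤ 2 * τ → T (i + t - 1) = T (j + t - 1)) :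
    i ∈ localMinimaSet T n τ φ ↔ j ∈ localMinimaSet T n τ φ := by
  have hagree : ∀ d ≤ τ, ∀ t < τ, T (i + d + t) = T (j + d + t) := fun d hd t ht => by
    simpa [show i + (d + t + 1) - 1 = i + d + t by omega,
      show j + (d + t + 1) - 1 = j + d + t by omega] using h (d + t + 1) (by omega) (by omega)
  have hΦ : ∀ d ≤ τ, φ (window T τ (i + d)) = φ (window T τ (j + d)) := fun d hd =>
    congrArg φ (funext fun t => hagree d hd t t.isLt)
  have hQ : ∀ d ≤ τ, i + d ∈ highlyPeriodicSet T n τ ↔ j + d ∈ highlyPeriodicSet T n τ :=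
    fun d hd => by
      simp only [highlyPeriodicSet, Set.mem_ofPred_eq, winPer_congr (hagree d hd)]
      exact and_congr (iff_of_true (by omega) (by omega))
        (and_congr_left fun _ => iff_of_true (by omega) (by omega))
  exact ⟨fun h => ⟨hj, hjn, h.2.2.of_shift hΦ hQ⟩,
    fun h => ⟨hi, hin, h.2.2.of_shift (fun d hd => (hΦ d hd).symm) fun d hd => (hQ d hd).symm⟩⟩

theorem localMinimaSet_inter_Icc_eq_empty_iff (hτ : 1 ≤ τ) {i : ℕ} (hi : 1 ≤ i)
    (hin : i + 3 * τ ≤ n + 2) :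
    localMinimaSet T n τ φ ∩ Set.Icc i (i + τ - 1) = ∅ ↔
      minPer (fun t => T (i + t - 1)) (3 * τ - 1) ≤ τ / 3 := by
  rw [minPer_shift_le_iff_forall_window (m := τ) (by omega) (by omega),
    Set.eq_empty_iff_forall_notMem]
  constructor
  · intro hA c hic hc
    by_contra hcQ
    obtain ⟨k, hik, hk, hkA⟩ :=
      exists_minAtEnds_of_notMem (fun j => φ (window T τ j)) hic (by omega : c < i + 2 * τ)
        fun (h : c ∈ highlyPeriodicSet T n τ) => hcQ h.2.2
    exact hA k ⟨⟨by omega, by omega, hkA⟩, by omega, by omega⟩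
  · rintro hwin k ⟨⟨-, -, j₀, ⟨hkj₀, hj₀⟩, hj₀Q, -⟩, hik, hk⟩
    exact hj₀Q ⟨by omega, by omega, hwin j₀ (by omega) (by omega)⟩

end Synchronizing

end

theorem local_minima_give_synchronizing_set_general {α X : Type*} [LinearOrder X]
    (T : ℕ → α) (n τ : ℕ) (hτ : 1 ≤ τ)
    (φ : (Fin τ → α) → X)
    (Q A : Set ℕ)
    (hQ : Q = {i | 1 ≤ i ∧ i + τ ≤ n + 1 ∧ winPer T τ i ≤ τ / 3})
    (hA : A = {i | 1 ≤ i ∧ i + 2 * τ ≤ n + 1 ∧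
      ∃ j₀ ∈ Set.Icc i (i + τ), j₀ ∉ Q ∧
        (∀ j ∈ Set.Icc i (i + τ), j ∉ Q → φ (window T τ j₀) ≤ φ (window T τ j)) ∧
        (φ (window T τ j₀) = φ (window T τ i) ∨
          φ (window T τ j₀) = φ (window T τ (i + τ)))}) :
    -- consistency
    (∀ i j, 1 ≤ i → i + 2 * τ ≤ n + 1 → 1 ≤ j → j + 2 * τ ≤ n + 1 →
      (∀ t, 1 ≤ t → t ≤ 2 * τ → T (i + t - 1) = T (j + t - 1)) →
      (i ∈ A ↔ j ∈ A)) ∧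
    -- density
    (∀ i, 1 ≤ i → i + 3 * τ ≤ n + 2 →
      (A ∩ Set.Icc i (i + τ - 1) = ∅ ↔
        minPer (fun t => T (i + t - 1)) (3 * τ - 1) ≤ τ / 3)) := by
  subst hQ hA
  exact ⟨fun i j => mem_localMinimaSet_congr (φ := φ),
    fun i => localMinimaSet_inter_Icc_eq_empty_iff hτ⟩

/-- The set `A` defined from an arbitrary mapping `φ : Σ^τ → X` by local minima of
`Φ(i) = φ(T[i .. i+τ-1])` over positions outside the highly-periodic set `Q` is always a
`τ`-synchronizing set of `T`: it satisfies both the consistency and the density conditions. -/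
theorem local_minima_give_synchronizing_set {α X : Type*} [LinearOrder X]
    (T : ℕ → α) (n τ : ℕ) (hτ : 1 ≤ τ) (hτn : 2 * τ ≤ n)
    (φ : (Fin τ → α) → X)
    (Q A : Set ℕ)
    (hQ : Q = {i | 1 ≤ i ∧ i + τ ≤ n + 1 ∧ winPer T τ i ≤ τ / 3})
    (hA : A = {i | 1 ≤ i ∧ i + 2 * τ ≤ n + 1 ∧
      ∃ j₀ ∈ Set.Icc i (i + τ), j₀ ∉ Q ∧
        (∀ j ∈ Set.Icc i (i + τ), j ∉ Q → φ (window T τ j₀) ≤ φ (window T τ j)) ∧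
        (φ (window T τ j₀) = φ (window T τ i) ∨
          φ (window T τ j₀) = φ (window T τ (i + τ)))}) :
    -- consistency
    (∀ i j, 1 ≤ i → i + 2 * τ ≤ n + 1 → 1 ≤ j → j + 2 * τ ≤ n + 1 →
      (∀ t, 1 ≤ t → t ≤ 2 * τ → T (i + t - 1) = T (j + t - 1)) →
      (i ∈ A ↔ j ∈ A)) ∧
    -- density
    (∀ i, 1 ≤ i → i + 3 * τ ≤ n + 2 →
      (A ∩ Set.Icc i (i + τ - 1) = ∅ ↔
        minPer (fun t => T (i + t - 1)) (3 * τ - 1) ≤ τ / 3)) :=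
  local_minima_give_synchronizing_set_general T n τ hτ φ Q A hQ hA
end

section
/- Let Y be a set, let D and N be positive integers, and let ψ : [1 .. N] → Y^D be an injective function, where ψ(k) = (ψ(k)_1, …, ψ(k)_D). For k ∈ [1 .. N] and j ∈ [1 .. D], define c_{j,k} = |{ψ(k')_j : k' ∈ [1 .. k] and (ψ(k')_1, …, ψ(k')_{j−1}) = (ψ(k)_1, …, ψ(k)_{j−1})}| (note c_{j,k} ≥ 1 since k' = k is allowed). Then Σ_{k=1}^{N} Π_{j=1}^{D} 1/c_{j,k} ≤ (Σ_{t=1}^{N} 1/t)^D. -/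
/-! Sort the tuples into a trie by their first coordinate. A tuple whose first coordinate `y` is
the `m`-th distinct one to appear has `c_{1,k} ≥ m`, and the tuples with first coordinate `y`
form a smaller instance on the remaining `D - 1` coordinates, bounded by `H_N^{D-1}` by
induction. Since the ranks `m` of the distinct first coordinates are distinct numbers in
`[1, N]`, summing over `y` costs one more factor `H_N = ∑_{m ≤ N} 1/m`. -/

open scoped Classical

open Finset

lemma harmonic_nonneg (n : ℕ) : 0 ≤ harmonic n :=
  sum_nonneg fun _ _ => by positivity

lemma harmonic_mono : Monotone harmonic := fun _ _ h =>
  sum_le_sum_of_subset_of_nonneg (range_subset_range.2 h) fun _ _ _ => by positivity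

lemma harmonic_eq_sum_Icc_one_div (n : ℕ) :
    (harmonic n : ℝ) = ∑ t ∈ Icc 1 n, (1 : ℝ) / t := by
  rw [harmonic_eq_sum_Icc]
  push_cast
  simp only [one_div]

lemma sum_one_div_le_harmonic {T : Finset ℕ} {n : ℕ} (hT : T ⊆ Icc 1 n) :
    ∑ t ∈ T, (1 : ℝ) / t ≤ harmonic n := by
  rw [harmonic_eq_sum_Icc_one_div]
  exact sum_le_sum_of_subset_of_nonneg hT fun _ _ _ => by positivity

section Trie

variable {α β Y : Type*} [LinearOrder α]

noncomputable def distinctUpTo (S : Finset α) (g : α → β) (k : α) : ℕ :=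
  #((S.filter (· ≤ k)).image g)

lemma distinctUpTo_mono (S : Finset α) (g : α → β) : Monotone (distinctUpTo S g) :=
  fun _ _ h => card_le_card (image_subset_image (monotone_filter_right S fun _ _ hx => hx.trans h))

lemma distinctUpTo_pos {S : Finset α} (g : α → β) {k : α} (hk : k ∈ S) :
    0 < distinctUpTo S g k :=
  card_pos.2 ⟨g k, mem_image_of_mem g (mem_filter.2 ⟨hk, le_rfl⟩)⟩

lemma distinctUpTo_le_card (S : Finset α) (g : α → β) (k : α) : distinctUpTo S g k ≤ #S :=
  card_image_le.trans (card_le_card (filter_subset _ _))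

lemma distinctUpTo_lt_of_first_occurrence {S : Finset α} {g : α → β} {k k' : α}
    (hk' : k' ∈ S) (hfirst : ∀ i ∈ S, g i = g k' → k' ≤ i) (hlt : k < k') :
    distinctUpTo S g k < distinctUpTo S g k' := by
  refine card_lt_card ((ssubset_iff_of_subset ?_).2 ⟨g k', ?_, ?_⟩)
  · exact image_subset_image (monotone_filter_right S fun _ _ hx => hx.trans hlt.le)
  · exact mem_image_of_mem g (mem_filter.2 ⟨hk', le_rfl⟩)
  · simp only [mem_image, mem_filter, not_exists, not_and, and_imp]
    intro i hi hik hgi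
    exact absurd (hfirst i hi hgi) (not_le.2 (hik.trans_lt hlt))

theorem sum_div_distinctUpTo_le (S : Finset α) (g : α → β) (F : α → ℝ)
    (hF : ∀ k ∈ S, 0 ≤ F k) {B : ℝ} (hB : ∀ y, ∑ k ∈ S with g k = y, F k ≤ B) :
    ∑ k ∈ S, F k / distinctUpTo S g k ≤ harmonic #S * B := by
  rcases S.eq_empty_or_nonempty with rfl | ⟨k₀, hk₀⟩
  · simp
  have hB₀ : 0 ≤ B := (sum_nonneg fun k hk => hF k (mem_filter.1 hk).1).trans (hB (g k₀))
  have hfirst : ∀ y ∈ S.image g, ∃ k ∈ S, g k = y ∧ ∀ i ∈ S, g i = y → k ≤ i := by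
    intro y hy
    obtain ⟨k, hk, hmin⟩ := exists_min_image (S.filter (g · = y)) id
      (by simpa [Finset.Nonempty] using hy)
    exact ⟨k, (mem_filter.1 hk).1, (mem_filter.1 hk).2,
      fun i hi hgi => hmin i (mem_filter.2 ⟨hi, hgi⟩)⟩
  have : Nonempty α := ⟨k₀⟩
  choose! first hfirst_mem hfirst_eq hfirst_le using hfirst
  set r := distinctUpTo S g
  have hrank_inj : Set.InjOn (r ∘ first) (S.image g : Set β) := by
    intro y hy y' hy' h
    rcases lt_trichotomy (first y) (first y') with hlt | heq | hlt
    · refine absurd h (distinctUpTo_lt_of_first_occurrence (hfirst_mem y' hy') ?_ hlt).ne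
      simpa only [hfirst_eq y' hy'] using hfirst_le y' hy'
    · rw [← hfirst_eq y hy, ← hfirst_eq y' hy', heq]
    · refine absurd h (distinctUpTo_lt_of_first_occurrence (hfirst_mem y hy) ?_ hlt).ne'
      simpa only [hfirst_eq y hy] using hfirst_le y hy
  have hrank_mem : ∀ y ∈ S.image g, r (first y) ∈ Icc 1 #S := fun y hy =>
    mem_Icc.2 ⟨distinctUpTo_pos g (hfirst_mem y hy), distinctUpTo_le_card S g _⟩
  calc ∑ k ∈ S, F k / r k
      ≤ ∑ k ∈ S, F k / r (first (g k)) := by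
        refine sum_le_sum fun k hk => div_le_div_of_nonneg_left (hF k hk) ?_ ?_
        · exact_mod_cast distinctUpTo_pos g (hfirst_mem _ (mem_image_of_mem g hk))
        · exact_mod_cast distinctUpTo_mono S g
            (hfirst_le _ (mem_image_of_mem g hk) k hk rfl)
    _ = ∑ y ∈ S.image g, (∑ k ∈ S with g k = y, F k) / r (first y) := by
        rw [← sum_fiberwise_of_maps_to fun k hk => mem_image_of_mem g hk]
        refine sum_congr rfl fun y _ => ?_
        rw [sum_div]
        exact sum_congr rfl fun k hk => by rw [(mem_filter.1 hk).2]
    _ ≤ ∑ y ∈ S.image g, B / r (first y) :=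
        sum_le_sum fun y _ => div_le_div_of_nonneg_right (hB y) (Nat.cast_nonneg _)
    _ = B * ∑ t ∈ (S.image g).image (r ∘ first), (1 : ℝ) / t := by
        rw [sum_image hrank_inj, mul_sum]
        simp only [Function.comp, mul_one_div]
    _ ≤ harmonic #S * B := by
        rw [mul_comm]
        refine mul_le_mul_of_nonneg_right (sum_one_div_le_harmonic ?_) hB₀
        exact image_subset_iff.2 hrank_mem

/-- With `S = [1, N]` and `s = 1` this is the paper's `c_{j,k}`; the tuple occupies the
coordinates `[s, s + D)`, which lets the induction on `D` peel off coordinate `s`. -/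
noncomputable def prefixCount (S : Finset α) (ψ : α → ℕ → Y) (s j : ℕ) (k : α) : ℕ :=
  #((S.filter fun k' => k' ≤ k ∧ ∀ i ∈ Ico s j, ψ k' i = ψ k i).image (ψ · j))

lemma prefixCount_self (S : Finset α) (ψ : α → ℕ → Y) (s : ℕ) (k : α) :
    prefixCount S ψ s s k = distinctUpTo S (ψ · s) k := by
  simp [prefixCount, distinctUpTo]

lemma prefixCount_eq_prefixCount_fiber (S : Finset α) (ψ : α → ℕ → Y) {s j : ℕ} (hsj : s < j)
    (k : α) : prefixCount S ψ s j k = prefixCount (S.filter (ψ · s = ψ k s)) ψ (s + 1) j k := by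
  unfold prefixCount
  congr 2
  ext k'
  simp only [mem_filter, ← insert_Ico_add_one_left_eq_Ico hsj, forall_mem_insert]
  tauto

theorem sum_prod_inv_prefixCount_le (D s : ℕ) (S : Finset α) (ψ : α → ℕ → Y)
    (hinj : ∀ k ∈ S, ∀ k' ∈ S, (∀ j ∈ Ico s (s + D), ψ k j = ψ k' j) → k = k') :
    ∑ k ∈ S, ∏ j ∈ Ico s (s + D), (1 : ℝ) / prefixCount S ψ s j k ≤ harmonic #S ^ D := by
  induction D generalizing s S with
  | zero =>
    have hS : #S ≤ 1 := card_le_one.2 fun k hk k' hk' => hinj k hk k' hk' (by simp)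
    simpa using hS
  | succ D ih =>
    have hIco : Ico s (s + (D + 1)) = insert s (Ico (s + 1) (s + 1 + D)) := by
      rw [insert_Ico_add_one_left_eq_Ico (by omega)]
      congr 1
      omega
    set F : α → ℝ := fun k =>
      ∏ j ∈ Ico (s + 1) (s + 1 + D), (1 : ℝ) / prefixCount (S.filter (ψ · s = ψ k s)) ψ (s + 1) j k
    have hsplit : ∀ k, ∏ j ∈ Ico s (s + (D + 1)), (1 : ℝ) / prefixCount S ψ s j k
        = F k / distinctUpTo S (ψ · s) k := by
      intro k
      rw [hIco, prod_insert (by simp), prefixCount_self, div_mul_eq_mul_div, one_mul]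
      refine congrArg (· / _) (prod_congr rfl fun j hj => ?_)
      rw [prefixCount_eq_prefixCount_fiber S ψ (mem_Ico.1 hj).1]
    have hfiber : ∀ y, ∑ k ∈ S with ψ k s = y, F k ≤ harmonic #S ^ D := by
      intro y
      have hinj_fiber : ∀ k ∈ S.filter (ψ · s = y), ∀ k' ∈ S.filter (ψ · s = y),
          (∀ j ∈ Ico (s + 1) (s + 1 + D), ψ k j = ψ k' j) → k = k' := by
        intro k hk k' hk' h
        simp only [mem_filter] at hk hk'
        refine hinj k hk.1 k' hk'.1 ?_
        rw [hIco, forall_mem_insert]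
        exact ⟨hk.2.trans hk'.2.symm, h⟩
      calc ∑ k ∈ S with ψ k s = y, F k
          = ∑ k ∈ S with ψ k s = y, ∏ j ∈ Ico (s + 1) (s + 1 + D),
              (1 : ℝ) / prefixCount (S.filter (ψ · s = y)) ψ (s + 1) j k :=
            sum_congr rfl fun k hk => by rw [← (mem_filter.1 hk).2]
        _ ≤ harmonic #(S.filter (ψ · s = y)) ^ D := ih (s + 1) _ hinj_fiber
        _ ≤ harmonic #S ^ D := by
            gcongr
            · exact_mod_cast harmonic_nonneg _
            · exact_mod_cast harmonic_mono (card_le_card (filter_subset _ _))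
    calc ∑ k ∈ S, ∏ j ∈ Ico s (s + (D + 1)), (1 : ℝ) / prefixCount S ψ s j k
        = ∑ k ∈ S, F k / distinctUpTo S (ψ · s) k := sum_congr rfl fun k _ => hsplit k
      _ ≤ harmonic #S * harmonic #S ^ D :=
          sum_div_distinctUpTo_le S _ F (fun _ _ => prod_nonneg fun _ _ => by positivity) hfiber
      _ = harmonic #S ^ (D + 1) := (pow_succ' _ _).symm

end Trie

theorem trie_counting_bound_general {Y : Type*} (D N : ℕ)
    (ψ : ℕ → ℕ → Y)
    (hinj : ∀ k ∈ Finset.Icc 1 N, ∀ k' ∈ Finset.Icc 1 N,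
      (∀ j ∈ Finset.Icc 1 D, ψ k j = ψ k' j) → k = k') :
    ∑ k ∈ Finset.Icc 1 N, ∏ j ∈ Finset.Icc 1 D,
      (1 : ℝ) / ((((Finset.Icc 1 k).filter
          (fun k' => ∀ j' ∈ Finset.Icc 1 (j - 1), ψ k' j' = ψ k j')).image
            (fun k' => ψ k' j)).card : ℝ)
      ≤ (∑ t ∈ Finset.Icc 1 N, (1 : ℝ) / (t : ℝ)) ^ D := by
  have hIcc : Ico 1 (1 + D) = Icc 1 D := by
    ext j; simp only [mem_Ico, mem_Icc]; omega
  have hcount : ∀ k ∈ Icc 1 N, ∀ j ∈ Icc 1 D,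
      #(((Icc 1 k).filter fun k' => ∀ j' ∈ Icc 1 (j - 1), ψ k' j' = ψ k j').image (ψ · j))
        = prefixCount (Icc 1 N) ψ 1 j k := by
    intro k hk j _
    unfold prefixCount
    congr 2
    ext k'
    simp only [mem_filter, mem_Icc, mem_Ico] at hk ⊢
    constructor
    · rintro ⟨⟨h1, h2⟩, h⟩
      exact ⟨⟨h1, h2.trans hk.2⟩, h2, fun i hi => h i ⟨hi.1, by omega⟩⟩
    · rintro ⟨⟨h1, _⟩, h2, h⟩
      exact ⟨⟨h1, h2⟩, fun i hi => h i ⟨hi.1, by omega⟩⟩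
  have key := sum_prod_inv_prefixCount_le D 1 (Icc 1 N) ψ (by rwa [hIcc])
  rw [hIcc, Nat.card_Icc, Nat.add_sub_cancel, harmonic_eq_sum_Icc_one_div] at key
  exact le_of_eq_of_le
    (sum_congr rfl fun k hk => prod_congr rfl fun j hj => by rw [hcount k hk j hj]) key

/-- **Trie counting bound.** Let `ψ : [1 .. N] → Y^D` be injective (tuples are modeled as
maps `ℕ → Y` read at coordinates `1, …, D`).  For `k ∈ [1 .. N]` and `j ∈ [1 .. D]`, let
`c j k` be the number of distinct `j`-th coordinates among those `ψ(k')` with `k' ≤ k`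
agreeing with `ψ(k)` on the first `j - 1` coordinates.  Then
`Σ_{k=1}^{N} Π_{j=1}^{D} 1/c j k ≤ (Σ_{t=1}^{N} 1/t)^D`. -/
theorem trie_counting_bound {Y : Type*} (D N : ℕ)
    (hD : 1 ≤ D) (hN : 1 ≤ N)
    (ψ : ℕ → ℕ → Y)
    (hinj : ∀ k ∈ Finset.Icc 1 N, ∀ k' ∈ Finset.Icc 1 N,
      (∀ j ∈ Finset.Icc 1 D, ψ k j = ψ k' j) → k = k') :
    ∑ k ∈ Finset.Icc 1 N, ∏ j ∈ Finset.Icc 1 D,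
      (1 : ℝ) / ((((Finset.Icc 1 k).filter
          (fun k' => ∀ j' ∈ Finset.Icc 1 (j - 1), ψ k' j' = ψ k j')).image
            (fun k' => ψ k' j)).card : ℝ)
      ≤ (∑ t ∈ Finset.Icc 1 N, (1 : ℝ) / (t : ℝ)) ^ D :=
  trie_counting_bound_general D N ψ hinj
end

section
/- Let Σ be an alphabet, ⋆ a symbol not in Σ, and let m, d be positive integers. Let a, b : [1..m] × [1..d] → Σ ∪ {⋆} be arrays such that for every i ∈ [1..m], the row (a_{i,1}, …, a_{i,d}) contains exactly one non-⋆ entry, denoted ã_i ∈ Σ, and likewise each row of b contains exactly one non-⋆ entry b̃_j ∈ Σ. Let #_1, …, #_{m−1}, $_1, …, $_{m−1} be 2(m−1) pairwise distinct symbols not in Σ ∪ {⋆}. Define S = A_1 #_1 A_2 #_2 ⋯ #_{m−1} A_m where A_i = ⋆^{10d} a_{i,1} a_{i,2} ⋯ a_{i,d} ⋆^{10d}, and define T = B_1 $_1 B_2 $_2 ⋯ $_{m−1} B_m where B_j = ⋆^{10d} b_{j,1} b_{j,2} ⋯ b_{j,d} ⋆^{10d}. Then: (1) if there exist i, j ∈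 [1..m] with ã_i = b̃_j, then S and T have a common substring of length at least 20d + 1; and (2) if S and T have a common substring of length at least 11d, then there exist i, j ∈ [1..m] with ã_i = b̃_j. -/
/-!
For (1), a common letter `c = ã_i = b̃_j` sits in the middle of both blocks `A_i` and `B_j`,
each of which contains `⋆^{10d} c ⋆^{10d}`.

For (2), a common substring `W` cannot contain a `#`, since `T` has none, so it lies inside
a single block `A_i = ⋆^{10d + p - 1} ã_i ⋆^{11d - p}`. Both star runs are shorter than `11d`,
so `W` contains `ã_i`; and the only letters of `T` are the `b̃_j`.
-/

/-- The extended alphabet: letters of `σ` (the alphabet `Σ`), the symbol `⋆`,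
the delimiter symbols `#_i`, and the delimiter symbols `$_i`.  By construction all of
these are pairwise distinct, `⋆ ∉ Σ`, and the delimiters lie outside `Σ ∪ {⋆}`. -/
inductive GadgetSym (σ : Type*) where
  | letter : σ → GadgetSym σ
  | star : GadgetSym σ
  | hash : ℕ → GadgetSym σ
  | dollar : ℕ → GadgetSym σ

/-- The block `⋆^{10d} x_{i,1} x_{i,2} ⋯ x_{i,d} ⋆^{10d}` built from row `i` of `x`. -/
def blockOf {σ : Type*} (x : ℕ → ℕ → GadgetSym σ) (d i : ℕ) : List (GadgetSym σ) :=
  List.replicate (10 * d) GadgetSym.star ++ (List.range d).map (fun j => x i (j + 1)) ++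
    List.replicate (10 * d) GadgetSym.star

/-- The string `A_1 δ_1 A_2 δ_2 ⋯ δ_{m-1} A_m`, where `A_i` is the block of row `i`
of `x` and `δ_i` is the `i`-th delimiter. -/
def bigString {σ : Type*} (x : ℕ → ℕ → GadgetSym σ) (delim : ℕ → GadgetSym σ) (m d : ℕ) :
    List (GadgetSym σ) :=
  ((List.range m).map
    (fun i₀ => blockOf x d (i₀ + 1) ++ if i₀ + 1 < m then [delim (i₀ + 1)] else [])).flatten

namespace List

variable {α : Type*}

theorem infix_or_infix_of_infix_append_cons {W u v : List α} {δ : α}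
    (h : W <:+: u ++ δ :: v) (hδ : δ ∉ W) : W <:+: u ∨ W <:+: v := by
  rcases infix_append_iff.1 h with hu | hv | ⟨l₁, l₂, rfl, hl₁, hl₂⟩
  · exact .inl hu
  · rcases infix_cons_iff.1 hv with hp | hv
    · rcases prefix_cons_iff.1 hp with rfl | ⟨t, rfl, -⟩
      · exact .inl nil_infix
      · exact absurd mem_cons_self hδ
    · exact .inr hv
  · rcases prefix_cons_iff.1 hl₂ with rfl | ⟨t, rfl, -⟩
    · exact .inl (by simpa using hl₁.isInfix)
    · exact absurd (by simp) hδ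

theorem infix_or_exists_infix_of_infix_flatten_append {f : ℕ → List α} {δ : ℕ → α}
    {W : List α} (hW : ∀ i, δ i ∉ W) {k : ℕ} {t : List α}
    (h : W <:+: ((range k).map fun i => f i ++ [δ i]).flatten ++ t) :
    W <:+: t ∨ ∃ i < k, W <:+: f i := by
  induction k generalizing t with
  | zero => simpa using h
  | succ k ih =>
    rw [range_succ, map_append, flatten_append] at h
    have h' : W <:+: (((range k).map fun i => f i ++ [δ i]).flatten ++ f k) ++ δ k :: t := by
      simpa only [map_cons, map_nil, flatten_cons, flatten_nil, append_nil, append_assoc,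
        cons_append, nil_append] using h
    rcases infix_or_infix_of_infix_append_cons h' (hW k) with h | h
    · rcases ih h with h | ⟨i, hi, h⟩
      · exact .inr ⟨k, k.lt_succ_self, h⟩
      · exact .inr ⟨i, by omega, h⟩
    · exact .inl h

theorem mem_of_infix_replicate_append_cons_replicate {W : List α} {s c : α} {k l : ℕ}
    (h : W <:+: replicate k s ++ c :: replicate l s) (hk : k < W.length) (hl : l < W.length) :
    c ∈ W := by
  by_contra hc
  rcases infix_or_infix_of_infix_append_cons h hc with h | h <;>
    · have := h.length_le
      simp only [length_replicate] at this
      omega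

theorem map_range_eq_replicate_append_cons {f : ℕ → α} {s c : α} {d p : ℕ} (hp : p < d)
    (hfp : f p = c) (hf : ∀ j < d, j ≠ p → f j = s) :
    (range d).map f = replicate p s ++ c :: replicate (d - p - 1) s := by
  refine ext_getElem (by simp; omega) fun n h₁ _ => ?_
  simp only [length_map, length_range] at h₁
  simp only [getElem_map, getElem_range]
  rcases lt_trichotomy n p with hn | rfl | hn
  · rw [getElem_append_left (by simpa using hn), getElem_replicate]
    exact hf n h₁ hn.ne
  · simpa using hfp
  · rw [getElem_append_right (by simp; omega), getElem_cons, dif_neg (by simp; omega),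
      getElem_replicate]
    exact hf n h₁ hn.ne'

end List

open List

section Gadget

variable {σ : Type*}

def OneLetterPerRow (x : ℕ → ℕ → GadgetSym σ) (xtil : ℕ → σ) (m d : ℕ) : Prop :=
  ∀ i, 1 ≤ i → i ≤ m → ∃ j, 1 ≤ j ∧ j ≤ d ∧ x i j = GadgetSym.letter (xtil i) ∧
    ∀ j', 1 ≤ j' → j' ≤ d → j' ≠ j → x i j' = GadgetSym.star

namespace OneLetterPerRow

variable {x : ℕ → ℕ → GadgetSym σ} {xtil : ℕ → σ} {m d : ℕ}

theorem entry_eq (h : OneLetterPerRow x xtil m d) {i j : ℕ} (hi₁ : 1 ≤ i) (hi₂ : i ≤ m)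
    (hj₁ : 1 ≤ j) (hj₂ : j ≤ d) :
    x i j = GadgetSym.star ∨ x i j = GadgetSym.letter (xtil i) := by
  obtain ⟨p, -, -, hp, hstar⟩ := h i hi₁ hi₂
  by_cases hjp : j = p
  · exact .inr (hjp ▸ hp)
  · exact .inl (hstar j hj₁ hj₂ hjp)

theorem blockOf_eq (h : OneLetterPerRow x xtil m d) {i : ℕ} (hi₁ : 1 ≤ i) (hi₂ : i ≤ m) :
    ∃ p < d, blockOf x d i = replicate (10 * d + p) GadgetSym.star ++
      GadgetSym.letter (xtil i) :: replicate (d - p - 1 + 10 * d) GadgetSym.star := by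
  obtain ⟨p, hp₁, hp₂, hp, hstar⟩ := h i hi₁ hi₂
  refine ⟨p - 1, by omega, ?_⟩
  have hrow := map_range_eq_replicate_append_cons (f := fun j => x i (j + 1)) (c := GadgetSym.letter (xtil i))
    (show p - 1 < d by omega) (by rwa [Nat.sub_add_cancel hp₁])
    (fun j hj hjp => hstar (j + 1) (by omega) (by omega) (by omega))
  rw [blockOf, hrow, replicate_add, replicate_add]
  simp only [append_assoc, cons_append]

theorem star_letter_star_infix_blockOf (h : OneLetterPerRow x xtil m d) {i : ℕ}
    (hi₁ : 1 ≤ i) (hi₂ : i ≤ m) :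
    replicate (10 * d) GadgetSym.star ++ GadgetSym.letter (xtil i) ::
      replicate (10 * d) GadgetSym.star <:+: blockOf x d i := by
  obtain ⟨p, -, hblock⟩ := h.blockOf_eq hi₁ hi₂
  refine ⟨replicate p GadgetSym.star, replicate (d - p - 1) GadgetSym.star, ?_⟩
  rw [hblock, Nat.add_comm (10 * d) p, Nat.add_comm (d - p - 1), replicate_add, replicate_add]
  simp only [append_assoc, cons_append]

end OneLetterPerRow

theorem blockOf_infix_bigString (x : ℕ → ℕ → GadgetSym σ) (δ : ℕ → GadgetSym σ)
    {m : ℕ} (d : ℕ) {i : ℕ} (hi₁ : 1 ≤ i) (hi₂ : i ≤ m) :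
    blockOf x d i <:+: bigString x δ m d := by
  have hmem : blockOf x d i ++ (if i < m then [δ i] else []) ∈
      (range m).map fun i₀ => blockOf x d (i₀ + 1) ++
        if i₀ + 1 < m then [δ (i₀ + 1)] else [] :=
    mem_map.2 ⟨i - 1, mem_range.2 (by omega), by rw [Nat.sub_add_cancel hi₁]⟩
  exact (prefix_append _ _).isInfix.trans (infix_of_mem_flatten hmem)

theorem mem_bigString {x : ℕ → ℕ → GadgetSym σ} {δ : ℕ → GadgetSym σ} {m d : ℕ}
    {e : GadgetSym σ} (he : e ∈ bigString x δ m d) :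
    e = GadgetSym.star ∨ (∃ i j, 1 ≤ i ∧ i ≤ m ∧ 1 ≤ j ∧ j ≤ d ∧ e = x i j) ∨
      ∃ i, e = δ i := by
  simp only [bigString, blockOf, mem_flatten, mem_map, mem_range] at he
  obtain ⟨_, ⟨i₀, hi₀, rfl⟩, he⟩ := he
  simp only [mem_append, mem_replicate, mem_map, mem_range] at he
  rcases he with ((⟨-, he⟩ | ⟨j, hj, rfl⟩) | ⟨-, he⟩) | he
  · exact .inl he
  · exact .inr (.inl ⟨i₀ + 1, j + 1, by omega, by omega, by omega, by omega, rfl⟩)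
  · exact .inl he
  · split_ifs at he
    · exact .inr (.inr ⟨i₀ + 1, mem_singleton.1 he⟩)
    · simp at he

theorem OneLetterPerRow.mem_bigString {x : ℕ → ℕ → GadgetSym σ} {xtil : ℕ → σ} {m d : ℕ}
    (h : OneLetterPerRow x xtil m d) {δ : ℕ → GadgetSym σ} {e : GadgetSym σ}
    (he : e ∈ bigString x δ m d) :
    e = GadgetSym.star ∨ (∃ i, 1 ≤ i ∧ i ≤ m ∧ e = GadgetSym.letter (xtil i)) ∨
      ∃ i, e = δ i := by
  rcases _root_.mem_bigString he with he | ⟨i, j, hi₁, hi₂, hj₁, hj₂, rfl⟩ | he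
  · exact .inl he
  · rcases h.entry_eq hi₁ hi₂ hj₁ hj₂ with he | he
    · exact .inl he
    · exact .inr (.inl ⟨i, hi₁, hi₂, he⟩)
  · exact .inr (.inr he)

theorem bigString_succ (x : ℕ → ℕ → GadgetSym σ) (δ : ℕ → GadgetSym σ) (k d : ℕ) :
    bigString x δ (k + 1) d =
      ((range k).map fun i => blockOf x d (i + 1) ++ [δ (i + 1)]).flatten ++
        blockOf x d (k + 1) := by
  rw [bigString, range_succ, map_append, flatten_append]
  congr 1
  · exact congrArg flatten (map_congr_left fun i hi => by
      rw [if_pos (by simpa using mem_range.1 hi)])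
  · simp

theorem exists_infix_blockOf_of_infix_bigString {x : ℕ → ℕ → GadgetSym σ}
    {δ : ℕ → GadgetSym σ} {m d : ℕ} {W : List (GadgetSym σ)} (hne : W ≠ [])
    (hW : ∀ i, δ i ∉ W) (h : W <:+: bigString x δ m d) :
    ∃ i, 1 ≤ i ∧ i ≤ m ∧ W <:+: blockOf x d i := by
  obtain _ | k := m
  · exact absurd (eq_nil_of_infix_nil h) hne
  rw [bigString_succ] at h
  rcases infix_or_exists_infix_of_infix_flatten_append (fun i => hW (i + 1)) h with
    h | ⟨i, hi, h⟩
  · exact ⟨k + 1, by omega, le_rfl, h⟩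
  · exact ⟨i + 1, by omega, by omega, h⟩

end Gadget

theorem lcs_lower_bound_gadget_general {σ : Type*} (m d : ℕ) (hd : 1 ≤ d)
    (a b : ℕ → ℕ → GadgetSym σ) (atil btil : ℕ → σ)
    (ha : ∀ i, 1 ≤ i → i ≤ m → ∃ j, 1 ≤ j ∧ j ≤ d ∧ a i j = GadgetSym.letter (atil i) ∧
      ∀ j', 1 ≤ j' → j' ≤ d → j' ≠ j → a i j' = GadgetSym.star)
    (hb : ∀ i, 1 ≤ i → i ≤ m → ∃ j, 1 ≤ j ∧ j ≤ d ∧ b i j = GadgetSym.letter (btil i) ∧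
      ∀ j', 1 ≤ j' → j' ≤ d → j' ≠ j → b i j' = GadgetSym.star) :
    ((∃ i j, 1 ≤ i ∧ i ≤ m ∧ 1 ≤ j ∧ j ≤ m ∧ atil i = btil j) →
      ∃ W : List (GadgetSym σ), 20 * d + 1 ≤ W.length ∧
        W <:+: bigString a GadgetSym.hash m d ∧ W <:+: bigString b GadgetSym.dollar m d) ∧
    ((∃ W : List (GadgetSym σ), 11 * d ≤ W.length ∧
        W <:+: bigString a GadgetSym.hash m d ∧ W <:+: bigString b GadgetSym.dollar m d) →
      ∃ i j, 1 ≤ i ∧ i ≤ m ∧ 1 ≤ j ∧ j ≤ m ∧ atil i = btil j) := by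
  have ha : OneLetterPerRow a atil m d := ha
  have hb : OneLetterPerRow b btil m d := hb
  constructor
  · rintro ⟨i, j, hi₁, hi₂, hj₁, hj₂, hij⟩
    refine ⟨_, by simp; omega,
      (ha.star_letter_star_infix_blockOf hi₁ hi₂).trans (blockOf_infix_bigString _ _ d hi₁ hi₂),
      ?_⟩
    rw [hij]
    exact (hb.star_letter_star_infix_blockOf hj₁ hj₂).trans
      (blockOf_infix_bigString _ _ d hj₁ hj₂)
  · rintro ⟨W, hlen, hWS, hWT⟩
    have hhash : ∀ k, GadgetSym.hash k ∉ W := fun k hk => by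
      rcases hb.mem_bigString (hWT.subset hk) with h | ⟨_, _, _, h⟩ | ⟨_, h⟩ <;> cases h
    obtain ⟨i, hi₁, hi₂, hWA⟩ :=
      exists_infix_blockOf_of_infix_bigString (ne_nil_of_length_pos (by omega)) hhash hWS
    obtain ⟨p, hp, hblock⟩ := ha.blockOf_eq hi₁ hi₂
    have hletter : GadgetSym.letter (atil i) ∈ W :=
      mem_of_infix_replicate_append_cons_replicate (hblock ▸ hWA) (by omega) (by omega)
    rcases hb.mem_bigString (hWT.subset hletter) with h | ⟨j, hj₁, hj₂, h⟩ | ⟨_, h⟩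
    · cases h
    · exact ⟨i, j, hi₁, hi₂, hj₁, hj₂, GadgetSym.letter.inj h⟩
    · cases h

/-- **LCS lower-bound gadget.**  Each row of `a` (resp. `b`) has exactly one non-`⋆` entry
`ã i` (resp. `b̃ j`).  With `S = A_1 #_1 ⋯ #_{m-1} A_m` and `T = B_1 $_1 ⋯ $_{m-1} B_m`:
(1) if `ã i = b̃ j` for some `i, j ∈ [1..m]`, then `S` and `T` have a common substring of
length at least `20d + 1`; and (2) if `S` and `T` have a common substring of length at
least `11d`, then `ã i = b̃ j` for some `i, j ∈ [1..m]`. -/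
theorem lcs_lower_bound_gadget {σ : Type*} (m d : ℕ) (hm : 1 ≤ m) (hd : 1 ≤ d)
    (a b : ℕ → ℕ → GadgetSym σ) (atil btil : ℕ → σ)
    (ha : ∀ i, 1 ≤ i → i ≤ m → ∃ j, 1 ≤ j ∧ j ≤ d ∧ a i j = GadgetSym.letter (atil i) ∧
      ∀ j', 1 ≤ j' → j' ≤ d → j' ≠ j → a i j' = GadgetSym.star)
    (hb : ∀ i, 1 ≤ i → i ≤ m → ∃ j, 1 ≤ j ∧ j ≤ d ∧ b i j = GadgetSym.letter (btil i) ∧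
      ∀ j', 1 ≤ j' → j' ≤ d → j' ≠ j → b i j' = GadgetSym.star) :
    ((∃ i j, 1 ≤ i ∧ i ≤ m ∧ 1 ≤ j ∧ j ≤ m ∧ atil i = btil j) →
      ∃ W : List (GadgetSym σ), 20 * d + 1 ≤ W.length ∧
        W <:+: bigString a GadgetSym.hash m d ∧ W <:+: bigString b GadgetSym.dollar m d) ∧
    ((∃ W : List (GadgetSym σ), 11 * d ≤ W.length ∧
        W <:+: bigString a GadgetSym.hash m d ∧ W <:+: bigString b GadgetSym.dollar m d) →
      ∃ i j, 1 ≤ i ∧ i ≤ m ∧ 1 ≤ j ∧ j ≤ m ∧ atil i = btil j) :=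
  lcs_lower_bound_gadget_general m d hd a b atil btil ha hb
end

section
/- Let P be a string of length m, let T be a string, let k be a positive integer, and let R_1 = P[a_1 .. b_1], …, R_r = P[a_r .. b_r] be pairwise disjoint fragments of P with total length Σ_{i=1}^{r} |R_i| ≥ (3/8)·m. Suppose π is a position with δ_H(T[π .. π+m−1], P) ≤ k. For each i, let δ_H^π(R_i) = |{j ∈ [a_i .. b_i] : T[π + j − 1] ≠ P[j]}| be the number of mismatches located inside fragment R_i, and let I_π = {i ∈ [1 .. r] : δ_H^π(R_i) ≤ ⌊(4k/m)·|R_i|⌋}. Then Σ_{i ∈ I_π} |R_i| ≥ m/16. -/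
/-!
A fragment `R_i` outside `I_π` carries more than `(4k/m)·|R_i|` mismatches. The fragments are
disjoint and the whole occurrence has at most `k` mismatches, so these heavy fragments have total
length at most `m/4`. The light ones therefore cover at least `3m/8 - m/4 = m/8 ≥ m/16`.
-/

open Finset

theorem Set.ncard_setOf_le_and_le_and (p : ℕ → Prop) [DecidablePred p] (lo hi : ℕ) :
    {j | lo ≤ j ∧ j ≤ hi ∧ p j}.ncard = #{j ∈ Finset.Icc lo hi | p j} := by
  rw [← Set.ncard_coe_finset]
  congr 1
  ext j
  simp [and_assoc]

theorem sum_ncard_le_of_pairwise_disjoint_intervals {ι : Type*} (p : ℕ → Prop) (s : Finset ι)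
    (a b : ι → ℕ) (lo hi : ℕ) (hsub : ∀ i ∈ s, lo ≤ a i ∧ b i ≤ hi)
    (hdisj : (s : Set ι).Pairwise fun i i' => b i < a i' ∨ b i' < a i) :
    ∑ i ∈ s, {j | a i ≤ j ∧ j ≤ b i ∧ p j}.ncard ≤ {j | lo ≤ j ∧ j ≤ hi ∧ p j}.ncard := by
  classical
  simp only [Set.ncard_setOf_le_and_le_and]
  have hpd : (s : Set ι).PairwiseDisjoint fun i => {j ∈ Icc (a i) (b i) | p j} :=
    fun i hi i' hi' hne => by
      have := hdisj hi hi' hne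
      exact disjoint_left.mpr fun j hj hj' => by simp only [mem_filter, mem_Icc] at hj hj'; omega
  rw [← card_biUnion hpd]
  refine card_le_card fun j hj => ?_
  obtain ⟨i, hi, hj⟩ := mem_biUnion.mp hj
  simp only [mem_filter, mem_Icc] at hj ⊢
  have := hsub i hi
  exact ⟨⟨this.1.trans hj.1.1, hj.1.2.trans this.2⟩, hj.2⟩

theorem mul_sum_le_of_forall_mul_lt_mul {ι : Type*} (s : Finset ι) (w c : ι → ℕ) {q k m : ℕ}
    (hc : ∑ i ∈ s, c i ≤ k) (hheavy : ∀ i ∈ s, q * k * w i < m * c i) :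
    q * ∑ i ∈ s, w i ≤ m := by
  rcases Nat.eq_zero_or_pos k with rfl | hk
  · have hs : s = ∅ := eq_empty_of_forall_notMem fun i hi => by
      have hci := sum_eq_zero_iff.mp (Nat.le_zero.mp hc) i hi
      simpa [hci] using hheavy i hi
    simp [hs]
  · refine Nat.le_of_mul_le_mul_left ?_ hk
    calc k * (q * ∑ i ∈ s, w i) = ∑ i ∈ s, q * k * w i := by
          rw [mul_sum, mul_sum]; exact sum_congr rfl fun i _ => by ring
      _ ≤ ∑ i ∈ s, m * c i := sum_le_sum fun i hi => (hheavy i hi).le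
      _ = m * ∑ i ∈ s, c i := (mul_sum _ _ _).symm
      _ ≤ m * k := Nat.mul_le_mul_left m hc
      _ = k * m := mul_comm m k

theorem repetitive_regions_light_total_length_general {α : Type*} (P T : ℕ → α)
    (m k r π : ℕ)
    (a b : ℕ → ℕ)
    (hfrag : ∀ i, 1 ≤ i → i ≤ r → 1 ≤ a i ∧ a i ≤ b i ∧ b i ≤ m)
    (hdisj : ∀ i i', 1 ≤ i → i ≤ r → 1 ≤ i' → i' ≤ r → i ≠ i' →
      b i < a i' ∨ b i' < a i)
    (htotal : 3 * m ≤ 8 * ∑ i ∈ Finset.Icc 1 r, (b i - a i + 1))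
    (hocc : Set.ncard {t | 1 ≤ t ∧ t ≤ m ∧ T (π + t - 1) ≠ P t} ≤ k) :
    m ≤ 16 * ∑ i ∈ (Finset.Icc 1 r).filter
        (fun i => Set.ncard {j | a i ≤ j ∧ j ≤ b i ∧ T (π + j - 1) ≠ P j} ≤
          4 * k * (b i - a i + 1) / m),
      (b i - a i + 1) := by
  rcases Nat.eq_zero_or_pos m with rfl | hm
  · exact Nat.zero_le _
  set heavy := (Icc 1 r).filter fun i =>
    ¬ Set.ncard {j | a i ≤ j ∧ j ≤ b i ∧ T (π + j - 1) ≠ P j} ≤ 4 * k * (b i - a i + 1) / m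
  have hmem : ∀ i ∈ heavy, 1 ≤ i ∧ i ≤ r := fun i hi => mem_Icc.mp (mem_filter.mp hi).1
  have hmis : ∑ i ∈ heavy, Set.ncard {j | a i ≤ j ∧ j ≤ b i ∧ T (π + j - 1) ≠ P j} ≤ k :=
    (sum_ncard_le_of_pairwise_disjoint_intervals _ heavy a b 1 m
      (fun i hi => have := hfrag i (hmem i hi).1 (hmem i hi).2; ⟨this.1, this.2.2⟩)
      (fun i hi i' hi' hne =>
        hdisj i i' (hmem i hi).1 (hmem i hi).2 (hmem i' hi').1 (hmem i' hi').2 hne)).trans hocc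
  have hheavy : ∀ i ∈ heavy, 4 * k * (b i - a i + 1) <
      m * Set.ncard {j | a i ≤ j ∧ j ≤ b i ∧ T (π + j - 1) ≠ P j} := fun i hi => by
    rw [mul_comm m]
    exact (Nat.div_lt_iff_lt_mul hm).mp (not_le.mp (mem_filter.mp hi).2)
  have hheavy_length := mul_sum_le_of_forall_mul_lt_mul heavy _ _ hmis hheavy
  have hsplit : ∑ i ∈ (Icc 1 r).filter (fun i =>
        Set.ncard {j | a i ≤ j ∧ j ≤ b i ∧ T (π + j - 1) ≠ P j} ≤ 4 * k * (b i - a i + 1) / m),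
      (b i - a i + 1) + ∑ i ∈ heavy, (b i - a i + 1) = ∑ i ∈ Icc 1 r, (b i - a i + 1) :=
    sum_filter_add_sum_filter_not _ _ _
  omega

/-- **Many repetitive regions receive few mismatches.**  Let `P` be a string of length `m`,
let `R_i = P[a i .. b i]` (`i ∈ [1 .. r]`) be pairwise disjoint fragments of `P` of total
length at least `(3/8)·m`, and suppose `δ_H(T[π .. π+m-1], P) ≤ k`.  Let `I_π` be the set
of indices `i` such that the number of mismatches located inside `R_i` is at most
`⌊(4k/m)·|R_i|⌋`.  Then `Σ_{i ∈ I_π} |R_i| ≥ m/16`. -/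
theorem repetitive_regions_light_total_length {α : Type*} (P T : ℕ → α)
    (m k r π : ℕ) (hm : 1 ≤ m) (hk : 1 ≤ k) (hπ : 1 ≤ π)
    (a b : ℕ → ℕ)
    (hfrag : ∀ i, 1 ≤ i → i ≤ r → 1 ≤ a i ∧ a i ≤ b i ∧ b i ≤ m)
    (hdisj : ∀ i i', 1 ≤ i → i ≤ r → 1 ≤ i' → i' ≤ r → i ≠ i' →
      b i < a i' ∨ b i' < a i)
    (htotal : 3 * m ≤ 8 * ∑ i ∈ Finset.Icc 1 r, (b i - a i + 1))
    (hocc : Set.ncard {t | 1 ≤ t ∧ t ≤ m ∧ T (π + t - 1) ≠ P t} ≤ k) :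
    m ≤ 16 * ∑ i ∈ (Finset.Icc 1 r).filter
        (fun i => Set.ncard {j | a i ≤ j ∧ j ≤ b i ∧ T (π + j - 1) ≠ P j} ≤
          4 * k * (b i - a i + 1) / m),
      (b i - a i + 1) :=
  repetitive_regions_light_total_length_general P T m k r π a b hfrag hdisj htotal hocc
end

section
/- Let S_1 and S_2 be strings over an alphabet Σ, let $ be a symbol not in Σ, let T = S_1 $ S_2 be their concatenation separated by $, and let N = |T|. Let d ≥ 100 be an integer threshold and set τ = ⌊d/3⌋. Let A be any τ-synchronizing set of T, and let B ⊆ [1 .. N] be the set defined as follows: for every τ-run T[l .. r] (a run of length r − l + 1 ≥ 3τ − 1 with period p = per(T[l .. r]) ≤ τ/3), let P be the Lyndon root of T[l .. r] (the lexicographically minimal rotation of T[l .. l+p−1]), let i^{(b)} and i^{(e)} be respectively the first and last positions of occurrences of P that lie entirely within T[l .. r], and put i^{(b)}, i^{(b)} + p, and i^{(e)} into B. Suppose S_1 and S_2 have a common substring of length d, and among all pairs (i_1, i_2) with S_1[i_1 .. i_1+d−1] = S_2[i_2 .. i_2+d−1], choose one minimizing i_1 + i_2. Then this common substring is anchored by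 A ∪ B, i.e., there exists a shift h ∈ [0 .. d−1] such that both i_1 + h ∈ A ∪ B and |S_1| + 1 + i_2 + h ∈ A ∪ B. -/
/-- `per(T[l .. r])`: the minimal period of the substring `T[l .. r]`. -/
noncomputable def subPer {α : Type*} (T : ℕ → α) (l r : ℕ) : ℕ :=
  minPer (fun t => T (l + t - 1)) (r - l + 1)

/-- `A` is a `τ`-synchronizing set of the length-`N` string `T`:
`A ⊆ [1 .. N-2τ+1]`, and it satisfies the consistency and density conditions. -/
def IsSyncSet {α : Type*} (T : ℕ → α) (N τ : ℕ) (A : Set ℕ) : Prop :=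
  (∀ i ∈ A, 1 ≤ i ∧ i + 2 * τ ≤ N + 1) ∧
  (∀ i j, 1 ≤ i → i + 2 * τ ≤ N + 1 → 1 ≤ j → j + 2 * τ ≤ N + 1 →
    (∀ t, 1 ≤ t → t ≤ 2 * τ → T (i + t - 1) = T (j + t - 1)) → (i ∈ A ↔ j ∈ A)) ∧
  (∀ i, 1 ≤ i → i + 3 * τ ≤ N + 2 →
    (A ∩ Set.Icc i (i + τ - 1) = ∅ ↔ subPer T i (i + 3 * τ - 2) ≤ τ / 3))

/-- `T[l .. r]` is a *run* in the length-`N` string `T`: a periodic substring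
(`2·per ≤ length`) that cannot be extended to the left or to the right without an
increase of its shortest period. -/
def IsRun {α : Type*} (T : ℕ → α) (N l r : ℕ) : Prop :=
  1 ≤ l ∧ l ≤ r ∧ r ≤ N ∧ 2 * subPer T l r ≤ r - l + 1 ∧
    (l = 1 ∨ T (l - 1) ≠ T (l - 1 + subPer T l r)) ∧
    (r = N ∨ T (r + 1) ≠ T (r + 1 - subPer T l r))

/-- `T[l .. r]` is a `τ`-*run*: a run of length at least `3τ - 1` with period at most `τ/3`. -/
def IsTauRun {α : Type*} (T : ℕ → α) (N τ l r : ℕ) : Prop :=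
  IsRun T N l r ∧ 3 * τ ≤ r - l + 2 ∧ subPer T l r ≤ τ / 3

/-- The rotation by `s` of the length-`p` string `T[l .. l+p-1]`:
its `t`-th symbol is `T[l + ((t - 1 + s) mod p)]`. -/
def rotStr {α : Type*} (T : ℕ → α) (l p s : ℕ) : ℕ → α :=
  fun t => T (l + (t - 1 + s) % p)

/-- Lexicographic comparison of two length-`p` strings: `x ⪯ y` iff `x = y` or `x` is
strictly smaller at the first position where they differ. -/
def LexLE {α : Type*} [LinearOrder α] (x y : ℕ → α) (p : ℕ) : Prop :=
  (∀ t, 1 ≤ t → t ≤ p → x t = y t) ∨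
    ∃ t, 1 ≤ t ∧ t ≤ p ∧ (∀ t', 1 ≤ t' → t' < t → x t' = y t') ∧ x t < y t

/-- The set of starting positions of occurrences of the rotation `rotStr T l p s`
(where `p = per(T[l .. r])`) that lie entirely inside `T[l .. r]`. -/
def occSet {α : Type*} (T : ℕ → α) (l r s : ℕ) : Set ℕ :=
  {q | l ≤ q ∧ q + subPer T l r ≤ r + 1 ∧
    ∀ t, 1 ≤ t → t ≤ subPer T l r → T (q + t - 1) = rotStr T l (subPer T l r) s t}

/-- The anchor set `B`: for every `τ`-run `T[l .. r]` with period `p`, letting `P` be the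
Lyndon root (the lexicographically minimal rotation of `T[l .. l+p-1]`), and letting
`i^{(b)}` and `i^{(e)}` be the first and last occurrences of `P` inside `T[l .. r]`,
the positions `i^{(b)}`, `i^{(b)} + p` and `i^{(e)}` are placed in `B`. -/
def anchorB {α : Type*} [LinearOrder α] (T : ℕ → α) (N τ : ℕ) : Set ℕ :=
  {x | ∃ l r, IsTauRun T N τ l r ∧
    ∃ s, s < subPer T l r ∧
      (∀ s', s' < subPer T l r →
        LexLE (rotStr T l (subPer T l r) s) (rotStr T l (subPer T l r) s') (subPer T l r)) ∧
      (x = sInf (occSet T l r s) ∨ x = sInf (occSet T l r s) + subPer T l r ∨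
        x = sSup (occSet T l r s))}

/-!
Put `j = |S₁| + 1 + i₂`; the length-`d` windows at `i₁` and at `j` coincide. If their prefix of
length `3τ - 1` has no period `≤ τ/3`, the density condition puts an element of `A` among its first
`τ` positions, and consistency puts the element at the same offset from `j` into `A` as well.

Otherwise both windows extend to `τ`-runs with the same period `p` and the same Lyndon root,
which starts at the same offset `σ < p` from `i₁` and from `j`. A run's occurrences of its Lyndon
root are exactly the positions congruent to one of them mod `p`, because the root is primitive. If
the run through `i₁` ends inside the window, the run through `j` ends at the same offset, so the
last occurrences of the root sit at equal offsets. If not, minimality of `i₁ + i₂` (and, on the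
`S₂` side, the separator `$`) forbids either run from starting `p` or more positions before its
window, so `i₁ + σ` and `j + σ` are first occurrences of the root or the occurrences right after.
-/

def PeriodicOn {α : Type*} (T : ℕ → α) (l r p : ℕ) : Prop :=
  ∀ y, l ≤ y → y + p ≤ r → T y = T (y + p)

section Periodicity

variable {α : Type*} {T : ℕ → α} {l r p : ℕ}

lemma isPeriod_iff_periodicOn :
    IsPeriod (fun t => T (l + t - 1)) (r - l + 1) p ↔
      1 ≤ p ∧ p ≤ r - l + 1 ∧ PeriodicOn T l r p := by
  refine and_congr_right fun hp => and_congr_right fun hpr =>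
    ⟨fun h y hly hyr => ?_, fun h i hi hip => ?_⟩
  · have : T (l + (y - l + 1) - 1) = T (l + (y - l + 1 + p) - 1) :=
      h (y - l + 1) (by omega) (by omega)
    rwa [show l + (y - l + 1) - 1 = y by omega, show l + (y - l + 1 + p) - 1 = y + p by omega]
      at this
  · have := h (l + i - 1) (by omega) (by omega)
    rwa [show l + i - 1 + p = l + (i + p) - 1 by omega] at this

lemma subPer_spec (T : ℕ → α) (l r : ℕ) :
    1 ≤ subPer T l r ∧ subPer T l r ≤ r - l + 1 ∧ PeriodicOn T l r (subPer T l r) :=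
  isPeriod_iff_periodicOn.1 <| Nat.sInf_mem (s := {p | IsPeriod _ _ p})
    ⟨r - l + 1, isPeriod_iff_periodicOn.2 ⟨by omega, le_rfl, fun y _ _ => by omega⟩⟩

lemma subPer_le (hp : 1 ≤ p) (hpr : p ≤ r - l + 1) (h : PeriodicOn T l r p) :
    subPer T l r ≤ p :=
  Nat.sInf_le (isPeriod_iff_periodicOn.2 ⟨hp, hpr, h⟩)

lemma PeriodicOn.mono {l' r' : ℕ} (h : PeriodicOn T l r p) (hl : l ≤ l') (hr : r' ≤ r) :
    PeriodicOn T l' r' p :=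
  fun y hy hyr => h y (hl.trans hy) (hyr.trans hr)

lemma PeriodicOn.extend_left (h : PeriodicOn T l r p) (hl : T (l - 1) = T (l - 1 + p)) :
    PeriodicOn T (l - 1) r p := by
  intro y hy hyr
  rcases Nat.lt_or_ge y l with hyl | hyl
  · rwa [show y = l - 1 by omega]
  · exact h y hyl hyr

lemma PeriodicOn.extend_right (h : PeriodicOn T l r p) (hr : T (r + 1 - p) = T (r + 1))
    (hp : p ≤ r + 1) : PeriodicOn T l (r + 1) p := by
  intro y hy hyr
  rcases Nat.lt_or_ge (y + p) (r + 1) with hyr' | hyr'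
  · exact h y hy (by omega)
  · rwa [show y = r + 1 - p by omega, Nat.sub_add_cancel hp]

lemma PeriodicOn.shift {i j e : ℕ} (h : PeriodicOn T i (i + e) p)
    (hW : ∀ m ≤ e, T (i + m) = T (j + m)) : PeriodicOn T j (j + e) p := by
  intro y hy hye
  have := h (i + (y - j)) (by omega) (by omega)
  rwa [hW _ (by omega), add_assoc, hW _ (by omega), ← add_assoc, Nat.add_sub_cancel' hy] at this

lemma PeriodicOn.eq_add_mul (h : PeriodicOn T l r p) {x : ℕ} (hx : l ≤ x) :
    ∀ k, x + p * k ≤ r → T x = T (x + p * k)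
  | 0, _ => rfl
  | k + 1, hk => by
    rw [h.eq_add_mul hx k (by nlinarith), h _ (by omega) (by rw [mul_add] at hk; omega),
      mul_add, mul_one, add_assoc]

lemma PeriodicOn.eq_of_modEq (h : PeriodicOn T l r p) {x y : ℕ} (hx : l ≤ x) (hxr : x ≤ r)
    (hy : l ≤ y) (hyr : y ≤ r) (hxy : x ≡ y [MOD p]) : T x = T y := by
  wlog hle : x ≤ y generalizing x y
  · exact (this hy hyr hx hxr hxy.symm (by omega)).symm
  obtain ⟨k, hk⟩ := (Nat.modEq_iff_dvd' hle).1 hxy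
  rw [h.eq_add_mul hx k (by omega), ← hk, Nat.add_sub_cancel' hle]

lemma subPer_le_of_window {i j e : ℕ} (hW : ∀ m ≤ e, T (i + m) = T (j + m)) :
    subPer T j (j + e) ≤ subPer T i (i + e) := by
  obtain ⟨h1, h2, h3⟩ := subPer_spec T i (i + e)
  exact subPer_le h1 (by omega) (h3.shift hW)

lemma subPer_eq_of_window {i j e : ℕ} (hW : ∀ m ≤ e, T (i + m) = T (j + m)) :
    subPer T j (j + e) = subPer T i (i + e) :=
  le_antisymm (subPer_le_of_window hW) (subPer_le_of_window fun m hm => (hW m hm).symm)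

end Periodicity

section Rotations

variable {α : Type*} {T : ℕ → α} {l r p : ℕ}

lemma exists_lt_add_modEq (hp : 0 < p) (a x : ℕ) : ∃ s < p, a + s ≡ x [MOD p] := by
  have : NeZero p := ⟨hp.ne'⟩
  refine ⟨((x : ZMod p) - a).val, ZMod.val_lt _, ?_⟩
  rw [← ZMod.natCast_eq_natCast_iff]
  push_cast
  rw [ZMod.natCast_zmod_val]
  ring

lemma rotStr_eq_of_window (hp : 0 < p) {a b s : ℕ} (hW : ∀ m < p, T (a + m) = T (b + m)) :
    rotStr T a p s = rotStr T b p s :=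
  funext fun _ => hW _ (Nat.mod_lt _ hp)

lemma rotStr_zero_apply {q t : ℕ} (ht : 1 ≤ t) (htp : t ≤ p) :
    rotStr T q p 0 t = T (q + t - 1) := by
  simp only [rotStr, add_zero, Nat.mod_eq_of_lt (show t - 1 < p by omega)]
  congr 1
  omega

lemma PeriodicOn.rotStr_eq_of_modEq (h : PeriodicOn T l r p) (hp : 0 < p) {a b s s' : ℕ}
    (ha : l ≤ a) (ha' : a + p ≤ r + 1) (hb : l ≤ b) (hb' : b + p ≤ r + 1)
    (hmod : a + s ≡ b + s' [MOD p]) : rotStr T a p s = rotStr T b p s' := by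
  funext t
  have hs := Nat.mod_lt (t - 1 + s) hp
  have hs' := Nat.mod_lt (t - 1 + s') hp
  refine h.eq_of_modEq (by omega) (by omega) (by omega) (by omega) ?_
  calc a + (t - 1 + s) % p ≡ a + (t - 1 + s) [MOD p] := (Nat.mod_modEq _ _).add_left a
    _ = a + s + (t - 1) := by ring
    _ ≡ b + s' + (t - 1) [MOD p] := hmod.add_right _
    _ = b + (t - 1 + s') := by ring
    _ ≡ b + (t - 1 + s') % p [MOD p] := ((Nat.mod_modEq _ _).add_left b).symm

lemma PeriodicOn.eq_cyclic (h : PeriodicOn T l r p) (hp : 0 < p) (hlr : l + p ≤ r + 1) {y : ℕ}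
    (hly : l ≤ y) (hyr : y ≤ r) : T y = T (l + (y - l) % p) := by
  have := Nat.mod_lt (y - l) hp
  refine h.eq_of_modEq hly hyr (by omega) (by omega) ?_
  calc y = l + (y - l) := by omega
    _ ≡ l + (y - l) % p [MOD p] := ((Nat.mod_modEq _ _).add_left l).symm

/- Equal rotations by `a < b` make the cyclic word invariant under shifts by `b - a` and by `p`,
hence by `gcd (b - a) p`, which would be a period of `T[l .. r]` shorter than the minimal one. -/
lemma eq_of_rotStr_eq (hp : subPer T l r = p) (hlr : l + p ≤ r + 1) {a b : ℕ}
    (ha : a < p) (hb : b < p) (hab : ∀ t, 1 ≤ t → t ≤ p → rotStr T l p a t = rotStr T l p b t) :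
    a = b := by
  wlog hle : a ≤ b generalizing a b
  · exact (this hb ha (fun t h1 h2 => (hab t h1 h2).symm) (by omega)).symm
  by_contra hne
  obtain ⟨hp0, -, hper⟩ := subPer_spec T l r
  rw [hp] at hp0 hper
  set f : ℕ → α := fun u => T (l + u % p) with hf
  have hf_mod {u v : ℕ} (huv : u ≡ v [MOD p]) : f u = f v := by
    simp only [hf, show u % p = v % p from huv]
  have hf_diff : Function.Periodic f (b - a) := by
    intro u
    have := hab ((u + p - a) % p + 1) (by omega) (Nat.mod_lt _ (by omega))
    simp only [rotStr, Nat.add_sub_cancel] at this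
    refine (hf_mod ?_).trans (this.symm.trans (hf_mod ?_))
    · calc u + (b - a) ≡ u + p - a + b [MOD p] := by
            rw [show u + p - a + b = u + (b - a) + p by omega]; exact Nat.add_modEq_right.symm
        _ ≡ (u + p - a) % p + b [MOD p] := ((Nat.mod_modEq _ _).add_right b).symm
    · calc (u + p - a) % p + a ≡ u + p - a + a [MOD p] := (Nat.mod_modEq _ _).add_right a
        _ = u + p := by omega
        _ ≡ u [MOD p] := Nat.add_modEq_right
  set g := Nat.gcd (b - a) p
  have hg0 : 0 < g := Nat.gcd_pos_of_pos_left _ (by omega)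
  have hgp : g < p := (Nat.gcd_le_left _ (by omega)).trans_lt (by omega)
  obtain ⟨m, -, hm⟩ := Nat.exists_mul_mod_eq_gcd hgp
  have hf_gcd : Function.Periodic f g := by
    intro u
    rw [← hf_diff.nat_mul m u]
    refine hf_mod (Nat.ModEq.add_left u ?_)
    rw [Nat.cast_id, mul_comm]
    exact (Nat.mod_eq_of_lt hgp).trans hm.symm
  have hper_g : PeriodicOn T l r g := by
    intro y hy hyr
    rw [hper.eq_cyclic hp0 hlr hy (by omega), hper.eq_cyclic hp0 hlr (by omega) hyr,
      show y + g - l = y - l + g by omega]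
    exact (hf_gcd (y - l)).symm
  have := subPer_le hg0 (by omega) hper_g
  omega

end Rotations

section MinimalRotation

variable {β : Type*} [LinearOrder β] {T : ℕ → β} {l r p : ℕ}

lemma lexLE_of_toLex_le {x y : ℕ → β}
    (h : toLex (fun t : Fin p => x (t + 1)) ≤ toLex (fun t : Fin p => y (t + 1))) :
    LexLE x y p := by
  rcases h.lt_or_eq with ⟨i, hpre, hlt⟩ | heq
  · refine Or.inr ⟨i + 1, by omega, i.2, fun t ht hti => ?_, hlt⟩
    simpa [Nat.sub_add_cancel ht] using hpre ⟨t - 1, by omega⟩ (by simp [Fin.lt_def]; omega)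
  · refine Or.inl fun t ht htp => ?_
    simpa [Nat.sub_add_cancel ht] using congrFun heq ⟨t - 1, by omega⟩

def IsMinRotation (T : ℕ → β) (a p s : ℕ) : Prop :=
  ∀ s' < p, LexLE (rotStr T a p s) (rotStr T a p s') p

lemma exists_isMinRotation (T : ℕ → β) (a : ℕ) (hp : 0 < p) :
    ∃ s < p, IsMinRotation T a p s := by
  obtain ⟨s, hs, hmin⟩ := (Finset.range p).exists_min_image
    (fun s => toLex (fun t : Fin p => rotStr T a p s (t + 1))) ⟨0, Finset.mem_range.2 hp⟩
  exact ⟨s, Finset.mem_range.1 hs,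
    fun s' hs' => lexLE_of_toLex_le (hmin s' (Finset.mem_range.2 hs'))⟩

lemma IsMinRotation.of_window {a b s : ℕ} (h : IsMinRotation T a p s) (hp : 0 < p)
    (hW : ∀ m < p, T (a + m) = T (b + m)) : IsMinRotation T b p s := by
  simpa only [IsMinRotation, rotStr_eq_of_window hp hW] using h

lemma IsMinRotation.of_modEq (h : PeriodicOn T l r p) (hp : 0 < p) {a b σ s : ℕ}
    (hmin : IsMinRotation T a p σ) (ha : l ≤ a) (ha' : a + p ≤ r + 1) (hb : l ≤ b)
    (hb' : b + p ≤ r + 1) (hmod : b + s ≡ a + σ [MOD p]) : IsMinRotation T b p s := by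
  intro s' hs'
  obtain ⟨σ', hσ', hmod'⟩ := exists_lt_add_modEq hp a (b + s')
  rw [h.rotStr_eq_of_modEq hp hb hb' ha ha' hmod, h.rotStr_eq_of_modEq hp hb hb' ha ha' hmod'.symm]
  exact hmin σ' hσ'

end MinimalRotation

section Occurrences

variable {α : Type*} {T : ℕ → α} {l r p : ℕ}

lemma occSet_eq (hp : subPer T l r = p) (hlr : l + p ≤ r + 1) {s c : ℕ} (hs : s < p)
    (hc : l + s ≡ c [MOD p]) :
    occSet T l r s = {q | l ≤ q ∧ q + p ≤ r + 1 ∧ q ≡ c [MOD p]} := by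
  obtain ⟨hp0, -, hper⟩ := subPer_spec T l r
  rw [hp] at hp0 hper
  ext q
  simp only [occSet, hp, Set.mem_ofPred_eq]
  refine and_congr_right fun hlq => and_congr_right fun hqr => ?_
  have hq : q ≡ l + (q - l) % p [MOD p] := by
    calc q = l + (q - l) := by omega
      _ ≡ l + (q - l) % p [MOD p] := ((Nat.mod_modEq _ _).add_left l).symm
  have hocc : ∀ t, 1 ≤ t → t ≤ p → T (q + t - 1) = rotStr T l p ((q - l) % p) t :=
    fun t ht htp => by
      rw [← rotStr_zero_apply (T := T) ht htp,
        hper.rotStr_eq_of_modEq hp0 hlq hqr le_rfl hlr (s := 0) hq]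
  constructor
  · intro h
    have := eq_of_rotStr_eq hp hlr (Nat.mod_lt _ hp0) hs
      fun t ht htp => (hocc t ht htp).symm.trans (h t ht htp)
    rw [this] at hq
    exact hq.trans hc
  · intro hqc t ht htp
    have hqs := Nat.ModEq.add_left_cancel' l (hq.symm.trans (hqc.trans hc.symm))
    rw [Nat.ModEq, Nat.mod_mod, Nat.mod_eq_of_lt hs] at hqs
    rw [hocc t ht htp, hqs]

lemma csInf_modEq_eq {a : ℕ} (hla : l ≤ a) (hal : a < l + 2 * p)
    (har : a + p ≤ r + 1) :
    sInf {q | l ≤ q ∧ q + p ≤ r + 1 ∧ q ≡ a [MOD p]} = a ∨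
      sInf {q | l ≤ q ∧ q + p ≤ r + 1 ∧ q ≡ a [MOD p]} + p = a := by
  set O := {q | l ≤ q ∧ q + p ≤ r + 1 ∧ q ≡ a [MOD p]}
  have haO : a ∈ O := ⟨hla, har, rfl⟩
  obtain ⟨hlq, -, hqa⟩ : sInf O ∈ O := Nat.sInf_mem ⟨a, haO⟩
  have hqa_le : sInf O ≤ a := Nat.sInf_le haO
  obtain ⟨k, hk⟩ := (Nat.modEq_iff_dvd' hqa_le).1 hqa
  have hk2 : k < 2 := by
    by_contra hk2
    have : p * 2 ≤ p * k := Nat.mul_le_mul_left p (by omega)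
    omega
  interval_cases k <;> omega

lemma csSup_modEq_eq {a : ℕ} (hp : 0 < p) (hla : l ≤ a) (har : a + p ≤ r + 1) :
    sSup {q | l ≤ q ∧ q + p ≤ r + 1 ∧ q ≡ a [MOD p]} = a + p * ((r + 1 - p - a) / p) := by
  have hK := Nat.mul_div_le (r + 1 - p - a) p
  refine IsGreatest.csSup_eq ⟨⟨by omega, by omega, Nat.add_mul_mod_self_left a p _⟩, ?_⟩
  rintro q ⟨-, hqr, hqa⟩
  by_contra! hlt
  obtain ⟨c, hc⟩ := (Nat.modEq_iff_dvd' (by omega)).1 hqa.symm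
  have : c ≤ (r + 1 - p - a) / p := (Nat.le_div_iff_mul_le hp).2 (by rw [mul_comm]; omega)
  have := Nat.mul_le_mul_left p this
  omega

end Occurrences

section Anchors

variable {β : Type*} [LinearOrder β] {T : ℕ → β} {N τ l r p i σ : ℕ}

lemma mem_anchorB_of_isMinRotation (hrun : IsTauRun T N τ l r) (hp : subPer T l r = p)
    (hli : l ≤ i) (hir : i + p ≤ r + 1) (hmin : IsMinRotation T i p σ) {x : ℕ}
    (hx : let O := {q | l ≤ q ∧ q + p ≤ r + 1 ∧ q ≡ i + σ [MOD p]}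
      x = sInf O ∨ x = sInf O + p ∨ x = sSup O) :
    x ∈ anchorB T N τ := by
  obtain ⟨hp0, -, hper⟩ := subPer_spec T l r
  rw [hp] at hp0 hper
  obtain ⟨s, hs, hmod⟩ := exists_lt_add_modEq hp0 l (i + σ)
  have hlr : l + p ≤ r + 1 := by omega
  refine ⟨l, r, hrun, s, hp ▸ hs, hp ▸ hmin.of_modEq hper hp0 hli hir le_rfl hlr hmod, ?_⟩
  rwa [hp, occSet_eq hp hlr hs hmod]

lemma add_mem_anchorB_of_lt (hrun : IsTauRun T N τ l r) (hp : subPer T l r = p)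
    (hli : l ≤ i) (hil : i < l + p) (hσ : σ < p) (hmin : IsMinRotation T i p σ) :
    i + σ ∈ anchorB T N τ := by
  obtain ⟨hp0, -, -⟩ := subPer_spec T l r
  have hlen := hrun.2.1
  have hpτ := hrun.2.2
  rw [hp] at hp0 hpτ
  refine mem_anchorB_of_isMinRotation hrun hp hli (by omega) hmin ?_
  rcases csInf_modEq_eq (r := r) (p := p) (show l ≤ i + σ by omega) (by omega) (by omega)
    with h | h
  · exact Or.inl h.symm
  · exact Or.inr (Or.inl h.symm)

lemma add_mem_anchorB_last {e : ℕ} (hrun : IsTauRun T N τ l r) (hp : subPer T l r = p)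
    (hli : l ≤ i) (hr : r = i + e) (hσe : σ + p ≤ e + 1) (hmin : IsMinRotation T i p σ) :
    i + (σ + p * ((e + 1 - p - σ) / p)) ∈ anchorB T N τ := by
  obtain ⟨hp0, -, -⟩ := subPer_spec T l r
  rw [hp] at hp0
  refine mem_anchorB_of_isMinRotation hrun hp hli (by omega) hmin (Or.inr (Or.inr ?_))
  rw [csSup_modEq_eq hp0 (by omega) (by omega), hr, ← add_assoc]
  congr 3
  omega

end Anchors

section Runs

variable {α : Type*} {T : ℕ → α} {N l r p : ℕ}

lemma isRun_of_maximal (hp : subPer T l r = p) (hl : 1 ≤ l) (hrN : r ≤ N)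
    (hlen : 2 * p ≤ r - l + 1) (hleft : l = 1 ∨ ¬ PeriodicOn T (l - 1) r p)
    (hright : r = N ∨ ¬ PeriodicOn T l (r + 1) p) : IsRun T N l r := by
  obtain ⟨hp0, -, hper⟩ := subPer_spec T l r
  rw [hp] at hp0 hper
  refine ⟨hl, by omega, hrN, hp ▸ hlen, ?_, ?_⟩ <;> rw [hp]
  · exact hleft.imp_right fun h heq => h (hper.extend_left heq)
  · exact hright.imp_right fun h heq => h (hper.extend_right heq.symm (by omega))

lemma IsRun.le_right_end (hrun : IsRun T N l r) {i x : ℕ} (hli : l ≤ i)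
    (hir : i + subPer T l r ≤ r + 1) (hper : PeriodicOn T i x (subPer T l r)) (hxN : x ≤ N) :
    x ≤ r := by
  by_contra! hrx
  rcases hrun.2.2.2.2.2 with rfl | hne
  · omega
  · have := hper (r + 1 - subPer T l r) (by omega) (by omega)
    rw [Nat.sub_add_cancel (by omega)] at this
    exact hne this.symm

lemma min_end_sub_le_of_window {l' r' i j d : ℕ} (hrun : IsRun T N l r)
    (hp : subPer T l r = p) (hp' : subPer T l' r' = p) (hli : l ≤ i) (hir : i + p ≤ r + 1)
    (hlj : l' ≤ j) (hjr : j ≤ r') (hd : 0 < d) (hiN : i + d ≤ N + 1)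
    (hW : ∀ m < d, T (j + m) = T (i + m)) :
    min (r' - j) (d - 1) ≤ r - i := by
  have hper' := (subPer_spec T l' r').2.2
  rw [hp'] at hper'
  have hreach := (hper'.mono hlj (show j + min (r' - j) (d - 1) ≤ r' by omega)).shift
    (i := j) (j := i) fun m hm => hW m (by omega)
  rw [← hp] at hir hreach
  have := hrun.le_right_end hli hir hreach (by omega)
  omega

lemma min_end_sub_eq_of_window {l' r' i j d : ℕ} (hrun : IsRun T N l r) (hrun' : IsRun T N l' r')
    (hp : subPer T l r = p) (hp' : subPer T l' r' = p) (hli : l ≤ i) (hir : i + p ≤ r + 1)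
    (hlj : l' ≤ j) (hjr : j + p ≤ r' + 1) (hd : 0 < d) (hiN : i + d ≤ N + 1)
    (hjN : j + d ≤ N + 1) (hW : ∀ m < d, T (i + m) = T (j + m)) :
    min (r - i) (d - 1) = min (r' - j) (d - 1) := by
  have := (subPer_spec T l r).1
  have := min_end_sub_le_of_window hrun hp hp' hli hir hlj (by omega) hd hiN
    fun m hm => (hW m hm).symm
  have := min_end_sub_le_of_window hrun' hp' hp hlj hjr hli (by omega) hd hjN hW
  omega

lemma exists_tauRun_of_periodic_window {τ i : ℕ} (hi : 1 ≤ i) (hiN : i + 3 * τ - 2 ≤ N)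
    (hper : subPer T i (i + 3 * τ - 2) ≤ τ / 3) :
    ∃ l r, l ≤ i ∧ i + 3 * τ - 2 ≤ r ∧ IsTauRun T N τ l r ∧
      subPer T l r = subPer T i (i + 3 * τ - 2) := by
  classical
  obtain ⟨hp0, -, hwin⟩ := subPer_spec T i (i + 3 * τ - 2)
  set p := subPer T i (i + 3 * τ - 2)
  have hwin' : PeriodicOn T i (i + (3 * τ - 2)) p := hwin.mono le_rfl (by omega)
  set e := Nat.findGreatest (fun e => PeriodicOn T i (i + e) p) (N - i)
  have he : 3 * τ - 2 ≤ e := Nat.le_findGreatest (by omega) hwin'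
  have hper_r : PeriodicOn T i (i + e) p :=
    Nat.findGreatest_spec (P := fun e => PeriodicOn T i (i + e) p) (by omega) hwin'
  set k := Nat.findGreatest (fun k => PeriodicOn T (i - k) (i + e) p) (i - 1)
  have hper_run : PeriodicOn T (i - k) (i + e) p :=
    Nat.findGreatest_spec (P := fun k => PeriodicOn T (i - k) (i + e) p) (Nat.zero_le _) hper_r
  have hk : k ≤ i - 1 := Nat.findGreatest_le _
  have heN : e ≤ N - i := Nat.findGreatest_le _
  have hle := subPer_le hp0 (by omega) hper_run
  have hsub : subPer T (i - k) (i + e) = p := by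
    obtain ⟨h1, -, h3⟩ := subPer_spec T (i - k) (i + e)
    exact le_antisymm hle (subPer_le h1 (by omega) (h3.mono (by omega) (by omega)))
  refine ⟨i - k, i + e, by omega, by omega,
    ⟨isRun_of_maximal hsub (by omega) (by omega) (by omega) ?_ ?_, by omega, by rwa [hsub]⟩, hsub⟩
  · rcases Nat.eq_or_lt_of_le hk with hk' | hk'
    · exact Or.inl (by omega)
    · refine Or.inr fun h => Nat.findGreatest_is_greatest (lt_add_one k) (by omega) ?_
      rwa [show i - (k + 1) = i - k - 1 by omega]
  · rcases Nat.eq_or_lt_of_le heN with he' | he'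
    · exact Or.inl (by omega)
    · exact Or.inr fun h => Nat.findGreatest_is_greatest (lt_add_one e) (by omega)
        (h.mono (by omega) (by omega))

end Runs

lemma IsSyncSet.exists_common_mem {α : Type*} {T : ℕ → α} {N τ : ℕ} {A : Set ℕ}
    (hA : IsSyncSet T N τ A) {i j : ℕ} (hi : 1 ≤ i) (hj : 1 ≤ j) (hiN : i + 3 * τ ≤ N + 2)
    (hjN : j + 3 * τ ≤ N + 2) (hW : ∀ m < 3 * τ - 1, T (i + m) = T (j + m))
    (hper : τ / 3 < subPer T i (i + 3 * τ - 2)) :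
    ∃ h < τ, i + h ∈ A ∧ j + h ∈ A := by
  obtain ⟨hA_range, hA_cons, hA_dense⟩ := hA
  obtain ⟨a, haA, hia, hai⟩ := Set.nonempty_iff_ne_empty.2
    fun hempty => hper.not_ge ((hA_dense i hi hiN).1 hempty)
  have := (hA_range a haA).2
  refine ⟨a - i, by omega, by rwa [Nat.add_sub_cancel' hia], ?_⟩
  refine (hA_cons a (j + (a - i)) (by omega) (by omega) (by omega) (by omega)
    fun t ht htτ => ?_).1 haA
  have := hW (a - i + (t - 1)) (by omega)
  rwa [← add_assoc, Nat.add_sub_cancel' hia, ← Nat.add_sub_assoc ht, ← add_assoc,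
    ← Nat.add_sub_assoc ht] at this

lemma exists_anchorB_of_periodic {β : Type*} [LinearOrder β] {T : ℕ → β} {N τ d i j : ℕ}
    (hτd : 3 * τ ≤ d) (hi : 1 ≤ i) (hj : 1 ≤ j) (hiN : i + d ≤ N + 1) (hjN : j + d ≤ N + 1)
    (hW : ∀ m < d, T (i + m) = T (j + m)) (hper : subPer T i (i + 3 * τ - 2) ≤ τ / 3)
    (hi_left : ∀ p, 0 < p → p < d → p < i → ¬ PeriodicOn T (i - p) (i + d - 1) p)
    (hj_left : ∀ p, 0 < p → p < d → p < j → ¬ PeriodicOn T (j - p) (j + d - 1) p) :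
    ∃ h < d, i + h ∈ anchorB T N τ ∧ j + h ∈ anchorB T N τ := by
  obtain ⟨hp0, -, -⟩ := subPer_spec T i (i + 3 * τ - 2)
  set p := subPer T i (i + 3 * τ - 2)
  have hpj : subPer T j (j + 3 * τ - 2) = p := by
    have := subPer_eq_of_window (e := 3 * τ - 2) fun m hm => hW m (by omega)
    rwa [← Nat.add_sub_assoc (by omega), ← Nat.add_sub_assoc (by omega)] at this
  obtain ⟨l₁, r₁, hl₁, hr₁, hrun₁, hp₁⟩ :=
    exists_tauRun_of_periodic_window (N := N) hi (by omega) hper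
  obtain ⟨l₂, r₂, hl₂, hr₂, hrun₂, hp₂⟩ :=
    exists_tauRun_of_periodic_window (N := N) hj (by omega) (hpj ▸ hper)
  rw [hpj] at hp₂
  obtain ⟨σ, hσ, hmin⟩ := exists_isMinRotation T i hp0
  have hmin' := hmin.of_window hp0 fun m hm => hW m (by omega)
  have hreach := min_end_sub_eq_of_window hrun₁.1 hrun₂.1 hp₁ hp₂ hl₁ (by omega) hl₂ (by omega)
    (by omega) hiN hjN hW
  by_cases hshort : r₁ - i < d - 1
  · have := Nat.mul_div_le (r₁ - i + 1 - p - σ) p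
    refine ⟨σ + p * ((r₁ - i + 1 - p - σ) / p), by omega,
      add_mem_anchorB_last hrun₁ hp₁ hl₁ (by omega) (by omega) hmin,
      add_mem_anchorB_last hrun₂ hp₂ hl₂ (by omega) (by omega) hmin'⟩
  · have hper₁ := (subPer_spec T l₁ r₁).2.2
    have hper₂ := (subPer_spec T l₂ r₂).2.2
    rw [hp₁] at hper₁
    rw [hp₂] at hper₂
    have hir₁ : i + d - 1 ≤ r₁ := by omega
    have hjr₂ : j + d - 1 ≤ r₂ := by omega
    have hi_near : i < l₁ + p := by
      by_contra!
      exact hi_left p hp0 (by omega) (by have := hrun₁.1.1; omega) (hper₁.mono (by omega) hir₁)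
    have hj_near : j < l₂ + p := by
      by_contra!
      exact hj_left p hp0 (by omega) (by have := hrun₂.1.1; omega) (hper₂.mono (by omega) hjr₂)
    exact ⟨σ, by omega, add_mem_anchorB_of_lt hrun₁ hp₁ hl₁ hi_near hσ hmin,
      add_mem_anchorB_of_lt hrun₂ hp₂ hl₂ hj_near hσ hmin'⟩

section Concatenation

variable {β : Type*} {S₁ S₂ T : ℕ → β} {n₁ n₂ d i₁ i₂ p : ℕ}

lemma common_of_periodicOn_left₁ (hT₁ : ∀ i, 1 ≤ i → i ≤ n₁ → T i = S₁ i)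
    (hcommon : ∀ t, 1 ≤ t → t ≤ d → S₁ (i₁ + t - 1) = S₂ (i₂ + t - 1))
    (hi₁d : i₁ + d ≤ n₁ + 1) (hpi : p < i₁) (hper : PeriodicOn T (i₁ - p) (i₁ + d - 1) p) :
    ∀ t, 1 ≤ t → t ≤ d → S₁ (i₁ - p + t - 1) = S₂ (i₂ + t - 1) := by
  intro t ht htd
  rw [← hcommon t ht htd, ← hT₁ _ (by omega) (by omega), ← hT₁ _ (by omega) (by omega)]
  have := hper (i₁ - p + t - 1) (by omega) (by omega)
  rwa [show i₁ - p + t - 1 + p = i₁ + t - 1 by omega] at this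

lemma common_of_periodicOn_left₂ {dollar : β} (hS₂ : ∀ i, 1 ≤ i → i ≤ n₂ → S₂ i ≠ dollar)
    (hTd : T (n₁ + 1) = dollar) (hT₂ : ∀ i, 1 ≤ i → i ≤ n₂ → T (n₁ + 1 + i) = S₂ i)
    (hcommon : ∀ t, 1 ≤ t → t ≤ d → S₁ (i₁ + t - 1) = S₂ (i₂ + t - 1))
    (hi₂ : 1 ≤ i₂) (hi₂d : i₂ + d ≤ n₂ + 1) (hp0 : 0 < p) (hpd : p < d)
    (hper : PeriodicOn T (n₁ + 1 + i₂ - p) (n₁ + 1 + i₂ + d - 1) p) :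
    p < i₂ ∧ ∀ t, 1 ≤ t → t ≤ d → S₁ (i₁ + t - 1) = S₂ (i₂ - p + t - 1) := by
  have hpi : p < i₂ := by
    by_contra! h
    apply hS₂ p (by omega) (by omega)
    rw [← hT₂ p (by omega) (by omega), ← hTd]
    exact (hper (n₁ + 1) (by omega) (by omega)).symm
  refine ⟨hpi, fun t ht htd => ?_⟩
  rw [hcommon t ht htd, ← hT₂ _ (by omega) (by omega), ← hT₂ _ (by omega) (by omega)]
  have := hper (n₁ + 1 + (i₂ - p + t - 1)) (by omega) (by omega)
  rw [show n₁ + 1 + (i₂ - p + t - 1) + p = n₁ + 1 + (i₂ + t - 1) by omega] at this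
  exact this.symm

end Concatenation

theorem lcs_anchoring_general {β : Type*} [LinearOrder β]
    (S₁ S₂ : ℕ → β) (n₁ n₂ : ℕ) (dollar : β)
    (hS₂ : ∀ i, 1 ≤ i → i ≤ n₂ → S₂ i ≠ dollar)
    (T : ℕ → β) (N : ℕ) (hN : N = n₁ + 1 + n₂)
    (hT₁ : ∀ i, 1 ≤ i → i ≤ n₁ → T i = S₁ i)
    (hTd : T (n₁ + 1) = dollar)
    (hT₂ : ∀ i, 1 ≤ i → i ≤ n₂ → T (n₁ + 1 + i) = S₂ i)
    (d τ : ℕ) (hτ : τ = d / 3)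
    (A : Set ℕ) (hA : IsSyncSet T N τ A)
    (i₁ i₂ : ℕ)
    (hi₁ : 1 ≤ i₁ ∧ i₁ + d ≤ n₁ + 1) (hi₂ : 1 ≤ i₂ ∧ i₂ + d ≤ n₂ + 1)
    (hcommon : ∀ t, 1 ≤ t → t ≤ d → S₁ (i₁ + t - 1) = S₂ (i₂ + t - 1))
    (hmin : ∀ i₁' i₂', 1 ≤ i₁' → i₁' + d ≤ n₁ + 1 → 1 ≤ i₂' → i₂' + d ≤ n₂ + 1 →
      (∀ t, 1 ≤ t → t ≤ d → S₁ (i₁' + t - 1) = S₂ (i₂' + t - 1)) →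
      i₁ + i₂ ≤ i₁' + i₂') :
    ∃ h, h < d ∧ i₁ + h ∈ A ∪ anchorB T N τ ∧
      n₁ + 1 + i₂ + h ∈ A ∪ anchorB T N τ := by
  obtain ⟨hi₁, hi₁d⟩ := hi₁
  obtain ⟨hi₂, hi₂d⟩ := hi₂
  have hW : ∀ m < d, T (i₁ + m) = T (n₁ + 1 + i₂ + m) := fun m hm => by
    rw [hT₁ _ (by omega) (by omega), add_assoc, hT₂ _ (by omega) (by omega)]
    simpa using hcommon (m + 1) (by omega) (by omega)
  by_cases hper : subPer T i₁ (i₁ + 3 * τ - 2) ≤ τ / 3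
  · obtain ⟨h, hhd, h₁, h₂⟩ := exists_anchorB_of_periodic (N := N) (by omega) hi₁ (by omega)
      (by omega) (by omega) hW hper
      (fun p _ _ hpi hper' => by
        have := hmin (i₁ - p) i₂ (by omega) (by omega) hi₂ hi₂d
          (common_of_periodicOn_left₁ hT₁ hcommon hi₁d hpi hper')
        omega)
      (fun p hp0 hpd _ hper' => by
        obtain ⟨hpi, hcommon'⟩ :=
          common_of_periodicOn_left₂ hS₂ hTd hT₂ hcommon hi₂ hi₂d hp0 hpd hper'
        have := hmin i₁ (i₂ - p) hi₁ hi₁d (by omega) (by omega) hcommon'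
        omega)
    exact ⟨h, hhd, Or.inr h₁, Or.inr h₂⟩
  · obtain ⟨h, hhτ, h₁, h₂⟩ := hA.exists_common_mem hi₁ (by omega) (by omega) (by omega)
      (fun m hm => hW m (by omega)) (not_le.1 hper)
    exact ⟨h, by omega, Or.inl h₁, Or.inl h₂⟩

/-- **Anchoring lemma.**  Let `T = S₁ $ S₂` (with `$` a symbol occurring in neither string),
`N = |T|`, `d ≥ 100`, `τ = ⌊d/3⌋`, and let `A` be any `τ`-synchronizing set of `T`.
If `S₁[i₁ .. i₁+d-1] = S₂[i₂ .. i₂+d-1]` is a length-`d` common substring minimizing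
`i₁ + i₂`, then it is anchored by `A ∪ B`: there is a shift `h ∈ [0 .. d-1]` with
`i₁ + h ∈ A ∪ B` and `|S₁| + 1 + i₂ + h ∈ A ∪ B`. -/
theorem lcs_anchoring {β : Type*} [LinearOrder β]
    (S₁ S₂ : ℕ → β) (n₁ n₂ : ℕ) (dollar : β)
    (hS₁ : ∀ i, 1 ≤ i → i ≤ n₁ → S₁ i ≠ dollar)
    (hS₂ : ∀ i, 1 ≤ i → i ≤ n₂ → S₂ i ≠ dollar)
    (T : ℕ → β) (N : ℕ) (hN : N = n₁ + 1 + n₂)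
    (hT₁ : ∀ i, 1 ≤ i → i ≤ n₁ → T i = S₁ i)
    (hTd : T (n₁ + 1) = dollar)
    (hT₂ : ∀ i, 1 ≤ i → i ≤ n₂ → T (n₁ + 1 + i) = S₂ i)
    (d τ : ℕ) (hd : 100 ≤ d) (hτ : τ = d / 3)
    (A : Set ℕ) (hA : IsSyncSet T N τ A)
    (i₁ i₂ : ℕ)
    (hi₁ : 1 ≤ i₁ ∧ i₁ + d ≤ n₁ + 1) (hi₂ : 1 ≤ i₂ ∧ i₂ + d ≤ n₂ + 1)
    (hcommon : ∀ t, 1 ≤ t → t ≤ d → S₁ (i₁ + t - 1) = S₂ (i₂ + t - 1))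
    (hmin : ∀ i₁' i₂', 1 ≤ i₁' → i₁' + d ≤ n₁ + 1 → 1 ≤ i₂' → i₂' + d ≤ n₂ + 1 →
      (∀ t, 1 ≤ t → t ≤ d → S₁ (i₁' + t - 1) = S₂ (i₂' + t - 1)) →
      i₁ + i₂ ≤ i₁' + i₂') :
    ∃ h, h < d ∧ i₁ + h ∈ A ∪ anchorB T N τ ∧
      n₁ + 1 + i₂ + h ∈ A ∪ anchorB T N τ :=
  lcs_anchoring_general S₁ S₂ n₁ n₂ dollar hS₂ T N hN hT₁ hTd hT₂ d τ hτ A hA i₁ i₂ hi₁ hi₂ hcommon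
    hmin
end
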